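/- arXiv:math/0611331 — 5 statements merged into one kernel-verified Lean document; each statement's English description precedes it below -/
import Mathlib

section
/- Let X be a metric space with an (n-1)-dimensional control function D : ℝ₊ → ℝ₊ ∪ {∞}. If f : {0,1,…,k}ⁿ → X is an injective r-cube whose inverse f⁻¹ (defined on the image of f, with the l₁-metric on the domain) is Lipschitz with constant Lip(f⁻¹), then k ≤ D(n·r) · Lip(f⁻¹). -/
open Function SemidirectProduct ENNReal

noncomputable section

/-- Word length of `g` with respect to a symmetrized generating set `S`. -/
def wordLength {G : Type*} [Group G] (S : Set G) (g : G) : ℕ :=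
  sInf {m | ∃ w : List G, w.length = m ∧ (∀ x ∈ w, x ∈ S ∨ x⁻¹ ∈ S) ∧ w.prod = g}

/-- The word metric on a group. -/
def wordDist {G : Type*} [Group G] (S : Set G) (g h : G) : ℝ :=
  wordLength S (g⁻¹ * h)

/-- Growth function: the number of elements in the open ball `B(1,r)` of the word metric. -/
def growth {G : Type*} [Group G] (S : Set G) (r : ℝ) : ℕ :=
  Nat.card {g : G | (wordLength S g : ℝ) < r}

/-- `x` and `y` are in the same `r`-component of `A ⊆ X` (distance function `d`):
they are joined by an `r`-path inside `A`. -/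
def ChainIn {X : Type*} (d : X → X → ℝ) (A : Set X) (r : ℝ) (x y : X) : Prop :=
  ∃ (m : ℕ) (c : Fin (m + 1) → X), (∀ i, c i ∈ A) ∧ c 0 = x ∧ c (Fin.last m) = y ∧
    ∀ i : Fin m, d (c i.castSucc) (c i.succ) < r

/-- `D` is an `n`-dimensional control function for the distance function `d` on `X`:
for every `r > 0` there is a cover by `n+1` sets of Lebesgue number at least `r`
whose `r`-components have diameter at most `D r`. -/
def IsControlFunction {X : Type*} (d : X → X → ℝ) (n : ℕ) (D : ℝ → ℝ≥0∞) : Prop :=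
  ∀ r : ℝ, 0 < r → ∃ P : Fin (n + 1) → Set X,
    (⋃ i, P i) = Set.univ ∧
    (∀ x : X, ∃ i, {y | d x y < r} ⊆ P i) ∧
    ∀ i, ∀ x ∈ P i, ∀ y ∈ P i, ChainIn d (P i) r x y → ENNReal.ofReal (d x y) ≤ D r

/-- `dim_AN(X,d) ≤ n`: there is an `n`-dimensional control function which is a dilation. -/
def ANdimLE {X : Type*} (d : X → X → ℝ) (n : ℕ) : Prop :=
  ∃ C : ℝ, 0 < C ∧ IsControlFunction d n fun r => ENNReal.ofReal (C * r)

/-- `f` weakly dominates `g`. -/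
def WeaklyDominates (f g : ℝ → ℝ) : Prop :=
  ∃ lam C : ℝ, 1 ≤ lam ∧ 0 ≤ C ∧ ∀ t : ℝ, 0 ≤ t → g t ≤ lam * f (lam * t + C) + C

/-- The base group of the restricted wreath product `H ≀ G`:
finitely supported functions `G → H` under pointwise multiplication. -/
def WreathBase (H G : Type*) [Group H] [Group G] : Subgroup (G → H) where
  carrier := {f | (Function.mulSupport f).Finite}
  one_mem' := by simp [Function.mulSupport_one]
  mul_mem' {a b} ha hb := ((ha.union hb).subset (Function.mulSupport_mul a b))
  inv_mem' {a} ha := by simpa [Function.mulSupport_inv] using ha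

variable (H G : Type*) [Group H] [Group G]

/-- The shift action of `b : G` on the base group, `(b • f) γ = f (b⁻¹ γ)`. -/
def wreathShift (b : G) : WreathBase H G ≃* WreathBase H G where
  toFun f := ⟨fun x => f.1 (b⁻¹ * x), by
    have h : Function.mulSupport (fun x => f.1 (b⁻¹ * x)) ⊆
        (fun x : G => b⁻¹ * x) ⁻¹' Function.mulSupport f.1 := fun x hx => hx
    exact (f.2.preimage ((mul_right_injective b⁻¹).injOn)).subset h⟩
  invFun f := ⟨fun x => f.1 (b * x), by
    have h : Function.mulSupport (fun x => f.1 (b * x)) ⊆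
        (fun x : G => b * x) ⁻¹' Function.mulSupport f.1 := fun x hx => hx
    exact (f.2.preimage ((mul_right_injective b).injOn)).subset h⟩
  left_inv f := by ext x; simp
  right_inv f := by ext x; simp
  map_mul' f g := rfl

/-- The action of `G` on the base group of the wreath product. -/
def wreathAct : G →* MulAut (WreathBase H G) where
  toFun := wreathShift H G
  map_one' := by
    refine MulEquiv.ext fun f => Subtype.ext (funext fun x => ?_)
    simp [wreathShift]
  map_mul' a b := by
    refine MulEquiv.ext fun f => Subtype.ext (funext fun x => ?_)
    simp [wreathShift, mul_assoc]

/-- The restricted wreath product `H ≀ G`. -/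
abbrev Wreath := WreathBase H G ⋊[wreathAct H G] G

/-- The element of the base group supported at `1` with value `a`. -/
def atOne (a : H) : WreathBase H G :=
  letI := Classical.decEq G
  ⟨fun x => if x = 1 then a else 1, Set.Finite.subset (Set.finite_singleton 1) (by
    intro x hx
    simp only [Function.mem_mulSupport] at hx
    simp only [Set.mem_singleton_iff]
    by_contra h
    exact hx (if_neg h))⟩

/-- The `(g,a)`-bulb `g·a·g⁻¹` in `H ≀ G`. -/
def bulb (g : G) (a : H) : Wreath H G :=
  inr g * inl (atOne H G a) * (inr g)⁻¹

/-- The generating set `(H ∖ {1}) ∪ S` of `H ≀ G`. -/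
def wreathGen (S : Set G) : Set (Wreath H G) :=
  {w | ∃ a : H, a ≠ 1 ∧ w = inl (atOne H G a)} ∪ {w | ∃ s ∈ S, w = inr s}

/-- The word metric on `H ≀ G` with respect to the generating set `(H ∖ {1}) ∪ S`. -/
def wreathDist (S : Set G) (x y : Wreath H G) : ℝ :=
  wordLength (wreathGen H G S) (x⁻¹ * y)

/-- The metric on the kernel `K` of `H ≀ G → G` induced from the word metric on `H ≀ G`. -/
def kerDist (S : Set G) (x y : (rightHom : Wreath H G →* G).ker) : ℝ :=
  wreathDist H G S x.1 y.1


/-- The `l₁`-distance on the discrete cube `{0,1,…,k}ⁿ`. -/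
def l1dist {n k : ℕ} (x y : Fin n → Fin (k + 1)) : ℝ :=
  ∑ i, |((x i : ℕ) : ℝ) - ((y i : ℕ) : ℝ)|

/-- An `r`-cube in `X` (with distance function `dX`): a map `f : {0,1,…,k}ⁿ → X` moving
adjacent lattice points less than `r` apart. -/
def IsRCube {X : Type*} (dX : X → X → ℝ) {n k : ℕ} (r : ℝ)
    (f : (Fin n → Fin (k + 1)) → X) : Prop :=
  ∀ (x : Fin n → Fin (k + 1)) (i : Fin n) (h : (x i : ℕ) < k),
    dX (f x) (f (Function.update x i ⟨(x i : ℕ) + 1, Nat.succ_lt_succ h⟩)) < r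


namespace Stmt3
open Finset Function

attribute [local instance] Classical.propDecidable

variable {k n : ℕ}

/-- A Kuhn simplex: a monotone lattice chain from `b` to `b + (1,…,1)`. -/
def KChain {n k : ℕ} (c : Fin (n+1) → Fin n → Fin (k+1)) : Prop :=
  (∀ j : Fin n, ∃ d : Fin n, ∀ e,
      (c j.succ e : ℕ) = (c j.castSucc e : ℕ) + (if e = d then 1 else 0)) ∧
  (∀ e, (c (Fin.last n) e : ℕ) = (c 0 e : ℕ) + 1)

lemma KChain.step {c : Fin (n+1) → Fin n → Fin (k+1)} (h : KChain c) {a : ℕ} (ha : a < n) :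
    ∃ d : Fin n, ∀ e, (c ⟨a+1, Nat.succ_lt_succ ha⟩ e : ℕ)
      = (c ⟨a, Nat.lt_succ_of_lt ha⟩ e : ℕ) + (if e = d then 1 else 0) := by
  obtain ⟨d, hd⟩ := h.1 ⟨a, ha⟩
  exact ⟨d, fun e => hd e⟩

lemma KChain.mono {c : Fin (n+1) → Fin n → Fin (k+1)} (h : KChain c) (e : Fin n) :
    Monotone fun i : Fin (n+1) => (c i e : ℕ) := by
  rw [Fin.monotone_iff_le_succ]
  intro j
  obtain ⟨d, hd⟩ := h.1 j
  have := hd e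
  split_ifs at this <;> omega

lemma KChain.lower {c : Fin (n+1) → Fin n → Fin (k+1)} (h : KChain c) (i : Fin (n+1))
    (e : Fin n) : (c 0 e : ℕ) ≤ (c i e : ℕ) :=
  h.mono e (Fin.zero_le i)

lemma KChain.upper {c : Fin (n+1) → Fin n → Fin (k+1)} (h : KChain c) (i : Fin (n+1))
    (e : Fin n) : (c i e : ℕ) ≤ (c 0 e : ℕ) + 1 := by
  have := h.mono e (Fin.le_last i)
  have h2 := h.2 e
  simp only at this
  omega

/-- Facet rainbow condition: deleting vertex `j`, the remaining labels are injective and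
avoid the top label. -/
def FRb {n k : ℕ} (ℓ : (Fin n → Fin (k+1)) → Fin (n+1))
    (c : Fin (n+1) → Fin n → Fin (k+1)) (j : Fin (n+1)) : Prop :=
  (∀ i : Fin n, ℓ (c (j.succAbove i)) ≠ Fin.last n) ∧
  Function.Injective fun i : Fin n => ℓ (c (j.succAbove i))

section Fiber

def Rj (g : Fin (n+1) → Fin (n+1)) (j : Fin (n+1)) : Prop :=
  (∀ i : Fin n, g (j.succAbove i) ≠ Fin.last n) ∧
  Function.Injective fun i : Fin n => g (j.succAbove i)

variable {g : Fin (n+1) → Fin (n+1)}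

lemma Rj.ne_last {j : Fin (n+1)} (h : Rj g j) {x : Fin (n+1)} (hx : x ≠ j) :
    g x ≠ Fin.last n := by
  obtain ⟨i, rfl⟩ := Fin.exists_succAbove_eq hx
  exact h.1 i

lemma Rj.injOn {j : Fin (n+1)} (h : Rj g j) {x y : Fin (n+1)} (hx : x ≠ j) (hy : y ≠ j)
    (hxy : g x = g y) : x = y := by
  obtain ⟨i, rfl⟩ := Fin.exists_succAbove_eq hx
  obtain ⟨i', rfl⟩ := Fin.exists_succAbove_eq hy
  exact congrArg _ (h.2 hxy)

lemma pair_filter {a b : Fin (n+1)} (ha : Rj g a) (hab : g a = g b) (hne : a ≠ b) :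
    (univ.filter (Rj g)) = {a, b} := by
  ext j
  simp only [mem_filter, mem_univ, true_and, mem_insert, mem_singleton]
  constructor
  · intro hj
    by_contra hcon
    push_neg at hcon
    exact hne (hj.injOn (Ne.symm hcon.1) (Ne.symm hcon.2) hab)
  · rintro (rfl | rfl)
    · exact ha
    · constructor
      · intro i
        have hx : j.succAbove i ≠ j := Fin.succAbove_ne j i
        by_cases hxa : j.succAbove i = a
        · rw [hxa, hab]
          exact ha.ne_last (Ne.symm hne)
        · exact ha.ne_last hxa
      · intro i i' hii
        simp only [] at hii
        have hx : j.succAbove i ≠ j := Fin.succAbove_ne j i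
        have hx' : j.succAbove i' ≠ j := Fin.succAbove_ne j i'
        apply Fin.succAbove_right_injective (p := j)
        by_cases hxa : j.succAbove i = a
        · by_cases hxa' : j.succAbove i' = a
          · rw [hxa, hxa']
          · exfalso
            rw [hxa, hab] at hii
            exact hx' (ha.injOn hxa' (Ne.symm hne) hii.symm)
        · by_cases hxa' : j.succAbove i' = a
          · exfalso
            rw [hxa', hab] at hii
            exact hx (ha.injOn hxa (Ne.symm hne) hii)
          · exact ha.injOn hxa hxa' hii

lemma fiber_parity (g : Fin (n+1) → Fin (n+1)) :
    (((univ.filter (Rj g)).card : ZMod 2)) = if Function.Injective g then 1 else 0 := by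
  by_cases hInj : Function.Injective g
  · rw [if_pos hInj]
    have hbij : Function.Bijective g := Finite.injective_iff_bijective.mp hInj
    obtain ⟨j₀, hj₀⟩ := hbij.surjective (Fin.last n)
    have : (univ.filter (Rj g)) = {j₀} := by
      ext j
      simp only [mem_filter, mem_univ, true_and, mem_singleton]
      constructor
      · intro hj
        by_contra hne
        have h1 : j₀ ≠ j := fun h => hne h.symm
        exact hj.ne_last h1 hj₀
      · rintro rfl
        constructor
        · intro i hc
          exact Fin.succAbove_ne _ i (hInj (hc.trans hj₀.symm))
        · exact hInj.comp Fin.succAbove_right_injective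
    rw [this]
    simp
  · rw [if_neg hInj]
    rw [Function.not_injective_iff] at hInj
    obtain ⟨a, b, hab, hne⟩ := hInj
    rcases (univ.filter (Rj g)).eq_empty_or_nonempty with hemp | ⟨j₀, hj₀⟩
    · rw [hemp]; simp
    · rw [mem_filter] at hj₀
      have hj₀ := hj₀.2
      have hj₀ab : j₀ = a ∨ j₀ = b := by
        by_contra hcon
        push_neg at hcon
        exact hne (hj₀.injOn (Ne.symm hcon.1) (Ne.symm hcon.2) hab)
      have hfe : (univ.filter (Rj g)) = {a, b} := by
        rcases hj₀ab with rfl | rfl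
        · exact pair_filter hj₀ hab hne
        · rw [pair_filter hj₀ hab.symm (Ne.symm hne)]
          ext x; simp only [mem_insert, mem_singleton]; tauto
      rw [hfe, Finset.card_insert_of_notMem (by simpa using hne), Finset.card_singleton]
      decide

end Fiber

/-- All (simplex, deleted-vertex) pairs whose facet is rainbow. -/
noncomputable def TT (ℓ : (Fin n → Fin (k+1)) → Fin (n+1)) :
    Finset ((Fin (n+1) → Fin n → Fin (k+1)) × Fin (n+1)) :=
  univ.filter fun p => KChain p.1 ∧ FRb ℓ p.1 p.2

/-- Rainbow simplices. -/
noncomputable def RS (ℓ : (Fin n → Fin (k+1)) → Fin (n+1)) :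
    Finset (Fin (n+1) → Fin n → Fin (k+1)) :=
  univ.filter fun c => KChain c ∧ Function.Injective (ℓ ∘ c)

lemma cardT (ℓ : (Fin n → Fin (k+1)) → Fin (n+1)) :
    ((TT ℓ).card : ZMod 2) = ((RS ℓ).card : ZMod 2) := by
  rw [TT, RS, Finset.card_filter, Finset.card_filter]
  push_cast
  rw [Fintype.sum_prod_type]
  congr 1
  funext c
  by_cases hc : KChain c
  · have h1 : ∀ j, (KChain c ∧ FRb ℓ c j) = FRb ℓ c j := by
      intro j; simp [hc]
    simp only [h1]
    have h2 : ∀ j : Fin (n+1), FRb ℓ c j = Rj (ℓ ∘ c) j := fun j => rfl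
    simp only [h2]
    have h3 := fiber_parity (ℓ ∘ c)
    rw [Finset.card_filter] at h3
    push_cast at h3
    rw [h3]
    simp [hc]
  · simp [hc]

/-- Middle pivot replacement vertex. -/
def wMid (c : Fin (n+1) → Fin n → Fin (k+1)) (j : Fin (n+1)) : Fin n → Fin (k+1) :=
  fun e => ⟨min k ((c ⟨(j:ℕ)-1, lt_of_le_of_lt (Nat.sub_le _ _) j.isLt⟩ e : ℕ) +
      ((c ⟨min ((j:ℕ)+1) n, Nat.lt_succ_of_le (Nat.min_le_right _ _)⟩ e : ℕ) - (c j e : ℕ))),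
    Nat.lt_succ_of_le (Nat.min_le_left _ _)⟩

def shiftUp (c : Fin (n+1) → Fin n → Fin (k+1)) : Fin (n+1) → Fin n → Fin (k+1) :=
  fun i => if h : (i:ℕ) = n then
      (fun e => ⟨min k ((c (Fin.last n) e : ℕ) +
        ((c ⟨min 1 n, Nat.lt_succ_of_le (Nat.min_le_right _ _)⟩ e : ℕ) - (c 0 e : ℕ))),
        Nat.lt_succ_of_le (Nat.min_le_left _ _)⟩)
    else c ⟨(i:ℕ)+1, Nat.succ_lt_succ (lt_of_le_of_ne (Nat.le_of_lt_succ i.isLt) h)⟩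

def shiftDown (c : Fin (n+1) → Fin n → Fin (k+1)) : Fin (n+1) → Fin n → Fin (k+1) :=
  fun i => if (i:ℕ) = 0 then
      (fun e => ⟨(c 0 e : ℕ) - ((c (Fin.last n) e : ℕ) -
        (c ⟨n-1, Nat.lt_succ_of_le (Nat.sub_le _ _)⟩ e : ℕ)),
        lt_of_le_of_lt (Nat.sub_le _ _) (c 0 e).isLt⟩)
    else c ⟨(i:ℕ)-1, lt_of_le_of_lt (Nat.sub_le _ _) i.isLt⟩

def pivot (c : Fin (n+1) → Fin n → Fin (k+1)) (j : Fin (n+1)) :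
    (Fin (n+1) → Fin n → Fin (k+1)) × Fin (n+1) :=
  if (j:ℕ) = 0 then (shiftUp c, Fin.last n)
  else if (j:ℕ) = n then (shiftDown c, 0)
  else (Function.update c j (wMid c j), j)

def interiorP (c : Fin (n+1) → Fin n → Fin (k+1)) (j : Fin (n+1)) : Prop :=
  if (j:ℕ) = 0 then
    ∀ e, (c (Fin.last n) e : ℕ) +
      ((c ⟨min 1 n, Nat.lt_succ_of_le (Nat.min_le_right _ _)⟩ e : ℕ) - (c 0 e : ℕ)) ≤ k
  else if (j:ℕ) = n then
    ∀ e, (c (Fin.last n) e : ℕ) - (c ⟨n-1, Nat.lt_succ_of_le (Nat.sub_le _ _)⟩ e : ℕ)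
      ≤ (c 0 e : ℕ)
  else True

/-- ℕ-valued access to chain vertices. -/
def cv (c : Fin (n+1) → Fin n → Fin (k+1)) (a : ℕ) (e : Fin n) : ℕ :=
  if h : a < n+1 then (c ⟨a, h⟩ e : ℕ) else 0

lemma cv_eq (c : Fin (n+1) → Fin n → Fin (k+1)) {a : ℕ} (h : a < n+1) (e : Fin n) :
    cv c a e = (c ⟨a, h⟩ e : ℕ) := dif_pos h

lemma cv_val (c : Fin (n+1) → Fin n → Fin (k+1)) (i : Fin (n+1)) (e : Fin n) :
    cv c (i:ℕ) e = (c i e : ℕ) := by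
  rw [cv, dif_pos i.isLt]

lemma cv_lt (c : Fin (n+1) → Fin n → Fin (k+1)) (a : ℕ) (e : Fin n) : cv c a e ≤ k := by
  rw [cv]
  split
  · exact Nat.le_of_lt_succ (Fin.isLt _)
  · exact Nat.zero_le k

lemma KChain.step_cv {c : Fin (n+1) → Fin n → Fin (k+1)} (hc : KChain c) {a : ℕ} (ha : a < n) :
    ∃ d : Fin n, ∀ e, cv c (a+1) e = cv c a e + (if e = d then 1 else 0) := by
  obtain ⟨d, hd⟩ := hc.1 ⟨a, ha⟩
  refine ⟨d, fun e => ?_⟩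
  rw [cv_eq c (by omega), cv_eq c (by omega)]
  exact hd e

lemma KChain.last_cv {c : Fin (n+1) → Fin n → Fin (k+1)} (hc : KChain c) (e : Fin n) :
    cv c n e = cv c 0 e + 1 := by
  rw [cv_eq c (by omega), cv_eq c (by omega)]
  exact hc.2 e

lemma KChain.mono_cv {c : Fin (n+1) → Fin n → Fin (k+1)} (hc : KChain c) {a b : ℕ}
    (hab : a ≤ b) (hb : b ≤ n) (e : Fin n) : cv c a e ≤ cv c b e := by
  rw [cv_eq c (by omega), cv_eq c (by omega)]
  exact hc.mono e (by simpa [Fin.le_def] using hab)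

lemma KChain.upper_cv {c : Fin (n+1) → Fin n → Fin (k+1)} (hc : KChain c) {a : ℕ}
    (ha : a ≤ n) (e : Fin n) : cv c a e ≤ cv c 0 e + 1 := by
  have h1 := hc.mono_cv ha (le_refl n) e
  have h2 := hc.last_cv e
  omega

lemma KChain.lower_cv {c : Fin (n+1) → Fin n → Fin (k+1)} (hc : KChain c) {a : ℕ}
    (ha : a ≤ n) (e : Fin n) : cv c 0 e ≤ cv c a e :=
  hc.mono_cv (Nat.zero_le a) ha e

lemma kchain_of_cv {c : Fin (n+1) → Fin n → Fin (k+1)}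
    (h1 : ∀ a, a < n → ∃ d : Fin n, ∀ e, cv c (a+1) e = cv c a e + (if e = d then 1 else 0))
    (h2 : ∀ e, cv c n e = cv c 0 e + 1) : KChain c := by
  constructor
  · intro j
    obtain ⟨d, hd⟩ := h1 j.1 j.2
    refine ⟨d, fun e => ?_⟩
    have := hd e
    rw [cv_eq c (show (j:ℕ)+1 < n+1 by omega) e, cv_eq c (show (j:ℕ) < n+1 by omega) e] at this
    exact this
  · intro e
    have := h2 e
    rw [cv_eq c (show n < n+1 by omega) e, cv_eq c (show 0 < n+1 by omega) e] at this
    exact this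

lemma cv_shiftUp (c : Fin (n+1) → Fin n → Fin (k+1)) {a : ℕ} (h : a < n) (e : Fin n) :
    cv (shiftUp c) a e = cv c (a+1) e := by
  rw [cv_eq _ (by omega), cv_eq _ (by omega), shiftUp, dif_neg (by simp; omega)]

lemma cv_shiftUp_last (c : Fin (n+1) → Fin n → Fin (k+1)) (e : Fin n) :
    cv (shiftUp c) n e = min k (cv c n e + (cv c (min 1 n) e - cv c 0 e)) := by
  rw [cv_eq _ (by omega), shiftUp, dif_pos (by simp)]
  rw [cv_eq c (by omega), cv_eq c (by omega), cv_eq c (by omega)]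
  rfl

lemma cv_shiftDown (c : Fin (n+1) → Fin n → Fin (k+1)) {a : ℕ} (h0 : a ≠ 0) (h : a ≤ n)
    (e : Fin n) : cv (shiftDown c) a e = cv c (a-1) e := by
  rw [cv_eq _ (by omega), cv_eq _ (by omega), shiftDown, if_neg (by simp; omega)]

lemma cv_shiftDown_zero (c : Fin (n+1) → Fin n → Fin (k+1)) (e : Fin n) :
    cv (shiftDown c) 0 e = cv c 0 e - (cv c n e - cv c (n-1) e) := by
  rw [cv_eq _ (by omega), shiftDown, if_pos (by simp)]
  rw [cv_eq c (by omega), cv_eq c (by omega), cv_eq c (by omega)]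
  rfl

lemma cv_update_ne (c : Fin (n+1) → Fin n → Fin (k+1)) (j : Fin (n+1)) (w : Fin n → Fin (k+1))
    {a : ℕ} (ha : a < n+1) (hne : a ≠ (j:ℕ)) (e : Fin n) :
    cv (Function.update c j w) a e = cv c a e := by
  rw [cv_eq _ ha, cv_eq _ ha, Function.update_of_ne (by simp [Fin.ext_iff]; omega)]

lemma cv_update_self (c : Fin (n+1) → Fin n → Fin (k+1)) (j : Fin (n+1))
    (w : Fin n → Fin (k+1)) (e : Fin n) :
    cv (Function.update c j w) (j:ℕ) e = (w e : ℕ) := by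
  rw [cv_val _ j, Function.update_self]

lemma cv_wMid (c : Fin (n+1) → Fin n → Fin (k+1)) (j : Fin (n+1)) (e : Fin n) :
    (wMid c j e : ℕ) = min k (cv c ((j:ℕ)-1) e + (cv c (min ((j:ℕ)+1) n) e - cv c (j:ℕ) e)) := by
  rw [wMid]
  rw [cv_eq c (by omega), cv_eq c (by omega), cv_val c j]

lemma cv_of_val (c : Fin (n+1) → Fin n → Fin (k+1)) (i : Fin (n+1)) {a : ℕ}
    (h : (i:ℕ) = a) (e : Fin n) : (c i e : ℕ) = cv c a e := by
  subst h; exact (cv_val c i e).symm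

lemma funext_chain {c c' : Fin (n+1) → Fin n → Fin (k+1)}
    (h : ∀ a, a < n+1 → ∀ e, cv c a e = cv c' a e) : c = c' := by
  funext i e
  apply Fin.ext
  have := h (i:ℕ) i.isLt e
  rwa [cv_val, cv_val] at this

lemma interiorP_zero {c : Fin (n+1) → Fin n → Fin (k+1)} {j : Fin (n+1)}
    (hj : (j:ℕ) = 0) (hn : 1 ≤ n) :
    interiorP c j ↔ ∀ e, cv c n e + (cv c 1 e - cv c 0 e) ≤ k := by
  rw [interiorP, if_pos hj]
  have e1 := cv_of_val c (Fin.last n) (Fin.val_last n)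
  have e2 := cv_of_val c 0 (Fin.val_zero (n+1))
  have e3 := cv_of_val (a := 1) c ⟨min 1 n, Nat.lt_succ_of_le (Nat.min_le_right _ _)⟩ (by simp; omega)
  constructor <;> intro h e <;> have := h e
  · rwa [e1, e2, e3] at this
  · rwa [e1, e2, e3]

lemma interiorP_last {c : Fin (n+1) → Fin n → Fin (k+1)} {j : Fin (n+1)}
    (hj : (j:ℕ) = n) (hn : 1 ≤ n) :
    interiorP c j ↔ ∀ e, cv c n e - cv c (n-1) e ≤ cv c 0 e := by
  rw [interiorP, if_neg (by omega), if_pos hj]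
  have e1 := cv_of_val c (Fin.last n) (Fin.val_last n)
  have e2 := cv_of_val c 0 (Fin.val_zero (n+1))
  have e3 := cv_of_val (a := n-1) c ⟨n-1, Nat.lt_succ_of_le (Nat.sub_le _ _)⟩ rfl
  constructor <;> intro h e <;> have := h e
  · rwa [e1, e2, e3] at this
  · rwa [e1, e2, e3]

lemma interiorP_mid {c : Fin (n+1) → Fin n → Fin (k+1)} {j : Fin (n+1)}
    (h0 : (j:ℕ) ≠ 0) (hn' : (j:ℕ) ≠ n) : interiorP c j := by
  rw [interiorP, if_neg h0, if_neg hn']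
  trivial

/-- All the properties of the upward pivot (case `j = 0`). -/
lemma shiftUp_good (hn : 1 ≤ n) {c : Fin (n+1) → Fin n → Fin (k+1)} (hc : KChain c)
    (hi : ∀ e, cv c n e + (cv c 1 e - cv c 0 e) ≤ k) :
    KChain (shiftUp c)
    ∧ (∀ i : Fin n, shiftUp c ((Fin.last n).succAbove i) = c ((0:Fin (n+1)).succAbove i))
    ∧ shiftDown (shiftUp c) = c
    ∧ (∀ e, cv (shiftUp c) n e - cv (shiftUp c) (n-1) e ≤ cv (shiftUp c) 0 e) := by
  obtain ⟨d₀, hd₀'⟩ := hc.step_cv (show 0 < n by omega)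
  have hd₀ : ∀ e, cv c 1 e = cv c 0 e + (if e = d₀ then 1 else 0) := by
    intro e; have := hd₀' e; simpa using this
  have up_last : ∀ e, cv (shiftUp c) n e = cv c n e + (if e = d₀ then 1 else 0) := by
    intro e
    rw [cv_shiftUp_last, show min 1 n = 1 by omega]
    have h1 := hd₀ e
    have h2 := hi e
    rw [min_eq_right (by omega)]
    omega
  have up_lt : ∀ a, a < n → ∀ e, cv (shiftUp c) a e = cv c (a+1) e := fun a ha e =>
    cv_shiftUp c ha e
  have up0 : ∀ e, cv (shiftUp c) 0 e = cv c 1 e := by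
    intro e; have := up_lt 0 (by omega) e; simpa using this
  have upn1 : ∀ e, cv (shiftUp c) (n-1) e = cv c n e := by
    intro e
    have := up_lt (n-1) (by omega) e
    rwa [show n-1+1 = n by omega] at this
  refine ⟨?_, ?_, ?_, ?_⟩
  · apply kchain_of_cv
    · intro a ha
      by_cases han : a = n - 1
      · refine ⟨d₀, fun e => ?_⟩
        have h1 := up_last e
        have h2 := upn1 e
        rw [show a = n-1 from han, show n-1+1 = n by omega, h1, h2]
      · obtain ⟨d, hd⟩ := hc.step_cv (show a+1 < n by omega)
        refine ⟨d, fun e => ?_⟩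
        rw [up_lt a ha e, up_lt (a+1) (by omega) e]
        exact hd e
    · intro e
      have h1 := up_last e
      have h2 := up0 e
      have h3 := hc.last_cv e
      have h4 := hd₀ e
      omega
  · intro i
    funext e
    apply Fin.ext
    rw [cv_of_val (shiftUp c) _ (a := i.1) (by simp [Fin.succAbove_last]) e,
      cv_of_val c _ (a := i.1+1) (by simp [Fin.zero_succAbove]) e]
    exact up_lt i.1 i.2 e
  · apply funext_chain
    intro a ha e
    by_cases ha0 : a = 0
    · subst ha0
      rw [cv_shiftDown_zero]
      have h1 := up_last e
      have h2 := up0 e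
      have h3 := upn1 e
      have h4 := hd₀ e
      omega
    · rw [cv_shiftDown _ (by omega) (by omega)]
      rw [up_lt (a-1) (by omega) e, show a-1+1 = a by omega]
  · intro e
    have h1 := up_last e
    have h2 := up0 e
    have h3 := upn1 e
    have h4 := hd₀ e
    omega

/-- All the properties of the downward pivot (case `j = last`). -/
lemma shiftDown_good (hn : 1 ≤ n) {c : Fin (n+1) → Fin n → Fin (k+1)} (hc : KChain c)
    (hi : ∀ e, cv c n e - cv c (n-1) e ≤ cv c 0 e) :
    KChain (shiftDown c)
    ∧ (∀ i : Fin n, shiftDown c ((0:Fin (n+1)).succAbove i) = c ((Fin.last n).succAbove i))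
    ∧ shiftUp (shiftDown c) = c
    ∧ (∀ e, cv (shiftDown c) n e + (cv (shiftDown c) 1 e - cv (shiftDown c) 0 e) ≤ k) := by
  obtain ⟨d₁, hd₁'⟩ := hc.step_cv (show n-1 < n by omega)
  have hd₁ : ∀ e, cv c n e = cv c (n-1) e + (if e = d₁ then 1 else 0) := by
    intro e
    have := hd₁' e
    rwa [show n-1+1 = n by omega] at this
  have hE : ∀ e, (if e = d₁ then 1 else 0) ≤ cv c 0 e := by
    intro e
    have h1 := hi e
    have h2 := hd₁ e
    omega
  have down_zero : ∀ e, cv (shiftDown c) 0 e = cv c 0 e - (if e = d₁ then 1 else 0) := by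
    intro e
    rw [cv_shiftDown_zero]
    have := hd₁ e
    omega
  have down_pos : ∀ a, a ≠ 0 → a ≤ n → ∀ e, cv (shiftDown c) a e = cv c (a-1) e :=
    fun a h0 hle e => cv_shiftDown c h0 hle e
  have down1 : ∀ e, cv (shiftDown c) 1 e = cv c 0 e := by
    intro e; have := down_pos 1 (by omega) (by omega) e; simpa using this
  have downn : ∀ e, cv (shiftDown c) n e = cv c (n-1) e :=
    fun e => down_pos n (by omega) (by omega) e
  refine ⟨?_, ?_, ?_, ?_⟩
  · apply kchain_of_cv
    · intro a ha
      by_cases ha0 : a = 0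
      · subst ha0
        refine ⟨d₁, fun e => ?_⟩
        have h1 := down1 e
        have h2 := down_zero e
        have h3 := hE e
        simpa using by omega
      · obtain ⟨d, hd⟩ := hc.step_cv (show a-1 < n by omega)
        refine ⟨d, fun e => ?_⟩
        rw [down_pos (a+1) (by omega) (by omega) e, down_pos a (by omega) (by omega) e,
          show a+1-1 = a-1+1 by omega]
        exact hd e
    · intro e
      rw [downn e, down_zero e]
      have h1 := hd₁ e
      have h2 := hc.last_cv e
      have h3 := hE e
      omega
  · intro i
    funext e
    apply Fin.ext
    rw [cv_of_val (shiftDown c) _ (a := i.1+1) (by simp [Fin.zero_succAbove]) e,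
      cv_of_val c _ (a := i.1) (by simp [Fin.succAbove_last]) e]
    rw [down_pos (i.1+1) (by omega) (by omega) e]
    simp
  · apply funext_chain
    intro a ha e
    by_cases han : a = n
    · rw [han]
      rw [cv_shiftUp_last, show min 1 n = 1 by omega]
      rw [downn e, down1 e, down_zero e]
      have h1 := hd₁ e
      have h2 := hE e
      have h3 := cv_lt c n e
      rw [min_eq_right (by omega)]
      omega
    · rw [cv_shiftUp _ (by omega), down_pos (a+1) (by omega) (by omega) e]
      simp
  · intro e
    rw [downn e, down1 e, down_zero e]
    have h1 := hd₁ e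
    have h2 := hE e
    have h3 := cv_lt c n e
    omega

/-- All the properties of the middle pivot. -/
lemma mid_good {c : Fin (n+1) → Fin n → Fin (k+1)} {j : Fin (n+1)} (hc : KChain c)
    (hj0 : (j:ℕ) ≠ 0) (hjn : (j:ℕ) ≠ n) :
    KChain (Function.update c j (wMid c j))
    ∧ (∀ i : Fin n, Function.update c j (wMid c j) (j.succAbove i) = c (j.succAbove i))
    ∧ Function.update (Function.update c j (wMid c j)) j
        (wMid (Function.update c j (wMid c j)) j) = c
    ∧ Function.update c j (wMid c j) j ≠ c j := by
  have ha1 : 1 ≤ (j:ℕ) := by omega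
  have han : (j:ℕ) < n := by have := j.isLt; omega
  obtain ⟨d₁, hd₁'⟩ := hc.step_cv (show (j:ℕ)-1 < n by omega)
  have hd₁ : ∀ e, cv c (j:ℕ) e = cv c ((j:ℕ)-1) e + (if e = d₁ then 1 else 0) := by
    intro e
    have := hd₁' e
    rwa [show (j:ℕ)-1+1 = (j:ℕ) by omega] at this
  obtain ⟨d₂, hd₂⟩ := hc.step_cv han
  have dne : d₁ ≠ d₂ := by
    intro h
    subst h
    have h1 := hd₁ d₁
    have h2 := hd₂ d₁
    have h3 := hc.upper_cv (show (j:ℕ)+1 ≤ n by omega) d₁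
    have h4 := hc.lower_cv (show (j:ℕ)-1 ≤ n by omega) d₁
    simp at h1 h2
    omega
  have wval : ∀ e, (wMid c j e : ℕ) = cv c ((j:ℕ)-1) e + (if e = d₂ then 1 else 0) := by
    intro e
    rw [cv_wMid, show min ((j:ℕ)+1) n = (j:ℕ)+1 by omega]
    have h1 := hd₁ e
    have h2 := hd₂ e
    have h3 := cv_lt c ((j:ℕ)+1) e
    rw [min_eq_right (by split_ifs at h1 h2 ⊢ <;> omega)]
    split_ifs at h1 h2 ⊢ <;> omega
  set c' := Function.update c j (wMid c j) with hc'
  have cva : ∀ e, cv c' (j:ℕ) e = cv c ((j:ℕ)-1) e + (if e = d₂ then 1 else 0) := by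
    intro e
    rw [cv_update_self]
    exact wval e
  have cvne : ∀ b, b < n+1 → b ≠ (j:ℕ) → ∀ e, cv c' b e = cv c b e := by
    intro b hb hba e
    exact cv_update_ne c j (wMid c j) hb hba e
  have hchain : KChain c' := by
    apply kchain_of_cv
    · intro b hb
      by_cases hb1 : b + 1 = (j:ℕ)
      · refine ⟨d₂, fun e => ?_⟩
        rw [hb1, cva e, cvne b (by omega) (by omega) e, show b = (j:ℕ) - 1 by omega]
      · by_cases hb2 : b = (j:ℕ)
        · refine ⟨d₁, fun e => ?_⟩
          rw [cvne (b+1) (by omega) (by omega) e, hb2, cva e]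
          have h1 := hd₁ e
          have h2 := hd₂ e
          split_ifs at h1 h2 ⊢ <;> omega
        · obtain ⟨d, hd⟩ := hc.step_cv hb
          refine ⟨d, fun e => ?_⟩
          rw [cvne (b+1) (by omega) (by omega) e, cvne b (by omega) (by omega) e]
          exact hd e
    · intro e
      rw [cvne n (by omega) (by omega) e, cvne 0 (by omega) (by omega) e]
      exact hc.last_cv e
  refine ⟨hchain, ?_, ?_, ?_⟩
  · intro i
    exact Function.update_of_ne (Fin.succAbove_ne j i) _ c
  · have wval' : ∀ e, (wMid c' j e : ℕ) = cv c (j:ℕ) e := by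
      intro e
      rw [cv_wMid, show min ((j:ℕ)+1) n = (j:ℕ)+1 by omega]
      rw [cvne ((j:ℕ)-1) (by omega) (by omega) e, cvne ((j:ℕ)+1) (by omega) (by omega) e, cva e]
      have h1 := hd₁ e
      have h2 := hd₂ e
      have h3 := cv_lt c (j:ℕ) e
      rw [min_eq_right (by split_ifs at h1 h2 ⊢ <;> omega)]
      split_ifs at h1 h2 ⊢ <;> omega
    have hwj : wMid c' j = c j := by
      funext e
      apply Fin.ext
      rw [wval' e, cv_val]
    rw [hwj, hc', Function.update_idem, Function.update_eq_self]
  · intro hcon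
    have hval := congrArg (fun u => (u d₁ : ℕ)) hcon
    have h1 : (c' j d₁ : ℕ) = cv c' (j:ℕ) d₁ := (cv_val c' j d₁).symm
    have h2 : (c j d₁ : ℕ) = cv c (j:ℕ) d₁ := (cv_val c j d₁).symm
    rw [h1, h2, cva d₁, hd₁ d₁] at hval
    simp [dne] at hval

lemma pivot_good (hn : 1 ≤ n) {ℓ : (Fin n → Fin (k+1)) → Fin (n+1)}
    {c : Fin (n+1) → Fin n → Fin (k+1)} {j : Fin (n+1)}
    (hc : KChain c) (hf : FRb ℓ c j) (hi : interiorP c j) :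
    (KChain (pivot c j).1 ∧ FRb ℓ (pivot c j).1 (pivot c j).2
      ∧ interiorP (pivot c j).1 (pivot c j).2)
    ∧ pivot (pivot c j).1 (pivot c j).2 = (c, j) ∧ pivot c j ≠ (c, j) := by
  by_cases h0 : (j:ℕ) = 0
  · have hj : j = 0 := by apply Fin.ext; simpa using h0
    have hp : pivot c j = (shiftUp c, Fin.last n) := by rw [pivot, if_pos h0]
    obtain ⟨G1, G2, G3, G4⟩ := shiftUp_good hn hc ((interiorP_zero h0 hn).mp hi)
    rw [hp]
    dsimp only
    subst hj
    refine ⟨⟨G1, ?_, ?_⟩, ?_, ?_⟩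
    · constructor
      · intro i
        rw [G2 i]
        exact hf.1 i
      · have he : (fun i : Fin n => ℓ (shiftUp c ((Fin.last n).succAbove i)))
            = fun i : Fin n => ℓ (c ((0:Fin (n+1)).succAbove i)) :=
          funext fun i => by rw [G2 i]
        rw [he]
        exact hf.2
    · exact (interiorP_last (Fin.val_last n) hn).mpr G4
    · rw [pivot, if_neg (by simp; omega), if_pos (Fin.val_last n)]
      rw [G3]
    · intro hcon
      have := congrArg Prod.snd hcon
      simp only at this
      have := congrArg Fin.val this
      simp at this
      omega
  · by_cases h1 : (j:ℕ) = n
    · have hj : j = Fin.last n := by apply Fin.ext; simpa using h1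
      have hp : pivot c j = (shiftDown c, 0) := by rw [pivot, if_neg h0, if_pos h1]
      obtain ⟨G1, G2, G3, G4⟩ := shiftDown_good hn hc ((interiorP_last h1 hn).mp hi)
      rw [hp]
      dsimp only
      subst hj
      refine ⟨⟨G1, ?_, ?_⟩, ?_, ?_⟩
      · constructor
        · intro i
          rw [G2 i]
          exact hf.1 i
        · have he : (fun i : Fin n => ℓ (shiftDown c ((0:Fin (n+1)).succAbove i)))
              = fun i : Fin n => ℓ (c ((Fin.last n).succAbove i)) :=
            funext fun i => by rw [G2 i]
          rw [he]
          exact hf.2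
      · exact (interiorP_zero (Fin.val_zero (n+1)) hn).mpr G4
      · rw [pivot, if_pos (Fin.val_zero (n+1))]
        rw [G3]
      · intro hcon
        have := congrArg Prod.snd hcon
        simp only at this
        have := congrArg Fin.val this
        simp at this
        omega
    · have hp : pivot c j = (Function.update c j (wMid c j), j) := by
        rw [pivot, if_neg h0, if_neg h1]
      obtain ⟨G1, G2, G3, G4⟩ := mid_good hc h0 h1
      rw [hp]
      dsimp only
      refine ⟨⟨G1, ?_, interiorP_mid h0 h1⟩, ?_, ?_⟩
      · constructor
        · intro i
          rw [G2 i]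
          exact hf.1 i
        · have he : (fun i : Fin n => ℓ (Function.update c j (wMid c j) (j.succAbove i)))
              = fun i : Fin n => ℓ (c (j.succAbove i)) :=
            funext fun i => by rw [G2 i]
          rw [he]
          exact hf.2
      · rw [pivot, if_neg h0, if_neg h1, G3]
      · intro hcon
        have := congrArg Prod.fst hcon
        simp only at this
        exact G4 (congrFun this j)

/-- The boundary pairs. -/
noncomputable def BD (ℓ : (Fin n → Fin (k+1)) → Fin (n+1)) :
    Finset ((Fin (n+1) → Fin n → Fin (k+1)) × Fin (n+1)) :=
  (TT ℓ).filter (fun p => ¬ interiorP p.1 p.2)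

lemma cardT_eq_boundary (hn : 1 ≤ n) (ℓ : (Fin n → Fin (k+1)) → Fin (n+1)) :
    ((TT ℓ).card : ZMod 2) = ((BD ℓ).card : ZMod 2) := by
  classical
  have hsplit := Finset.card_filter_add_card_filter_not
    (s := TT ℓ) (p := fun p => interiorP p.1 p.2)
  have heven : ((((TT ℓ).filter (fun p => interiorP p.1 p.2)).card : ZMod 2)) = 0 := by
    set S := (TT ℓ).filter (fun p => interiorP p.1 p.2) with hS
    have hsum : ∑ _x ∈ S, (1 : ZMod 2) = (S.card : ZMod 2) := by
      rw [Finset.sum_const, nsmul_eq_mul, mul_one]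
    rw [← hsum]
    apply Finset.sum_involution (g := fun p _ => pivot p.1 p.2)
    · intro a ha
      decide
    · intro a ha _
      rw [hS, Finset.mem_filter, TT, Finset.mem_filter] at ha
      have := (pivot_good hn ha.1.2.1 ha.1.2.2 ha.2).2.2
      intro hcon
      rw [hcon] at this
      exact this rfl
    · intro a ha
      rw [hS, Finset.mem_filter, TT, Finset.mem_filter] at ha ⊢
      obtain ⟨⟨G1, G2, G3⟩, _, _⟩ := pivot_good hn ha.1.2.1 ha.1.2.2 ha.2
      exact ⟨⟨Finset.mem_univ _, G1, G2⟩, G3⟩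
    · intro a ha
      rw [hS, Finset.mem_filter, TT, Finset.mem_filter] at ha
      have := (pivot_good hn ha.1.2.1 ha.1.2.2 ha.2).2.1
      simpa using this
  have : ((TT ℓ).card : ZMod 2)
      = (((TT ℓ).filter (fun p => interiorP p.1 p.2)).card : ZMod 2) + ((BD ℓ).card : ZMod 2) := by
    rw [BD]
    rw [← Nat.cast_add]
    norm_cast
    rw [hsplit]
  rw [this, heven, zero_add]

lemma FRb_surj {ℓ : (Fin n → Fin (k+1)) → Fin (n+1)} {c : Fin (n+1) → Fin n → Fin (k+1)}
    {j : Fin (n+1)} (hf : FRb ℓ c j) (v : Fin (n+1)) (hv : v ≠ Fin.last n) :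
    ∃ i : Fin n, ℓ (c (j.succAbove i)) = v := by
  classical
  set h : Fin n → Fin (n+1) := fun i => ℓ (c (j.succAbove i)) with hh
  have hsub : Finset.image h Finset.univ ⊆ Finset.univ.erase (Fin.last n) := by
    intro x hx
    rw [Finset.mem_image] at hx
    obtain ⟨i, _, rfl⟩ := hx
    exact Finset.mem_erase.mpr ⟨hf.1 i, Finset.mem_univ _⟩
  have hcard : (Finset.univ.erase (Fin.last n)).card ≤ (Finset.image h Finset.univ).card := by
    rw [Finset.card_image_of_injective _ hf.2, Finset.card_erase_of_mem (Finset.mem_univ _)]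
    simp
  have heq := Finset.eq_of_subset_of_card_le hsub hcard
  have hvmem : v ∈ Finset.image h Finset.univ := by
    rw [heq]
    exact Finset.mem_erase.mpr ⟨hv, Finset.mem_univ _⟩
  rw [Finset.mem_image] at hvmem
  obtain ⟨i, _, hi⟩ := hvmem
  exact ⟨i, hi⟩

lemma bdry_struct {m : ℕ} (hk : 1 ≤ k) {ℓ : (Fin (m+1) → Fin (k+1)) → Fin (m+2)}
    (h0 : ∀ x (d : Fin (m+1)), (x d : ℕ) = 0 → (ℓ x : ℕ) ≤ (d:ℕ))
    (hk' : ∀ x (d : Fin (m+1)), (x d : ℕ) = k → (ℓ x : ℕ) ≠ (d:ℕ))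
    {c : Fin (m+2) → Fin (m+1) → Fin (k+1)} {j : Fin (m+2)}
    (hc : KChain c) (hf : FRb ℓ c j) (hni : ¬ interiorP c j) :
    j = Fin.last (m+1)
    ∧ (∀ e, cv c (m+1) e = cv c m e + (if e = Fin.last m then 1 else 0))
    ∧ (∀ a, a ≤ m → cv c a (Fin.last m) = 0) := by
  have hm1 : 1 ≤ m + 1 := by omega
  -- first: j cannot have value 0
  have hj0 : (j:ℕ) ≠ 0 := by
    intro h0j
    have hj : j = 0 := by apply Fin.ext; simpa using h0j
    subst hj
    rw [interiorP_zero (Fin.val_zero (m+2)) hm1] at hni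
    push_neg at hni
    obtain ⟨e₀, he₀⟩ := hni
    obtain ⟨d₀, hd₀'⟩ := hc.step_cv (show 0 < m+1 by omega)
    have hd₀ : ∀ e, cv c 1 e = cv c 0 e + (if e = d₀ then 1 else 0) := by
      intro e; have := hd₀' e; simpa using this
    have hlt := cv_lt c (m+1) e₀
    have hed : e₀ = d₀ := by
      by_contra hne
      have := hd₀ e₀
      rw [if_neg hne] at this
      omega
    subst hed
    have h1 := hd₀ e₀
    rw [if_pos rfl] at h1
    have hcv1 : cv c 1 e₀ = k := by
      have := hc.lower_cv (show (1:ℕ) ≤ m+1 by omega) e₀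
      have := hc.upper_cv (le_refl (m+1)) e₀
      have := hc.last_cv e₀
      omega
    obtain ⟨i, hi⟩ := FRb_surj hf ⟨(e₀:ℕ), by omega⟩ (by
      intro hcon
      have := congrArg Fin.val hcon
      simp at this
      omega)
    have hvert : (c ((0:Fin (m+2)).succAbove i) e₀ : ℕ) = k := by
      rw [cv_of_val c _ (a := (i:ℕ)+1) (by simp [Fin.zero_succAbove])]
      have hmono1 := hc.mono_cv (show (1:ℕ) ≤ (i:ℕ)+1 by omega) (by omega) e₀
      have hmono2 := hc.mono_cv (show (i:ℕ)+1 ≤ m+1 by omega) (le_refl _) e₀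
      have := hc.last_cv e₀
      omega
    have := hk' (c ((0:Fin (m+2)).succAbove i)) e₀ hvert
    rw [hi] at this
    simp at this
  have hjn : (j:ℕ) = m+1 := by
    by_contra hne
    exact hni (interiorP_mid hj0 hne)
  have hj : j = Fin.last (m+1) := by apply Fin.ext; simpa using hjn
  subst hj
  rw [interiorP_last (Fin.val_last (m+1)) hm1] at hni
  push_neg at hni
  obtain ⟨e₀, he₀⟩ := hni
  obtain ⟨d₁, hd₁'⟩ := hc.step_cv (show m < m+1 by omega)
  have hd₁ : ∀ e, cv c (m+1) e = cv c m e + (if e = d₁ then 1 else 0) := by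
    intro e; have := hd₁' e; simpa using this
  have hsimp : (m+1) - 1 = m := by omega
  rw [hsimp] at he₀
  have hed : e₀ = d₁ := by
    by_contra hne
    have := hd₁ e₀
    rw [if_neg hne] at this
    omega
  subst hed
  have h1 := hd₁ e₀
  rw [if_pos rfl] at h1
  have hzero : cv c 0 e₀ = 0 := by omega
  have hfzero : ∀ a, a ≤ m → cv c a e₀ = 0 := by
    intro a ha
    have hmono1 := hc.lower_cv (show a ≤ m+1 by omega) e₀
    have hmono2 := hc.mono_cv (show a ≤ m by omega) (by omega) e₀
    have := hc.last_cv e₀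
    omega
  -- labels on facet are ≤ d₁, and the value m is attained, so d₁ = last
  obtain ⟨i, hi⟩ := FRb_surj hf ⟨m, by omega⟩ (by
    intro hcon
    have := congrArg Fin.val hcon
    simp at this)
  have hvert : (c ((Fin.last (m+1)).succAbove i) e₀ : ℕ) = 0 := by
    rw [cv_of_val c _ (a := (i:ℕ)) (by simp [Fin.succAbove_last])]
    exact hfzero (i:ℕ) (by omega)
  have hle := h0 (c ((Fin.last (m+1)).succAbove i)) e₀ hvert
  rw [hi] at hle
  simp at hle
  have hd₁last : e₀ = Fin.last m := by
    apply Fin.ext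
    have := e₀.isLt
    simp only [Fin.val_last]
    omega
  subst hd₁last
  exact ⟨rfl, hd₁, hfzero⟩

/-- Restriction of a boundary simplex to the bottom face. -/
def res {m : ℕ} (c : Fin (m+2) → Fin (m+1) → Fin (k+1)) : Fin (m+1) → Fin m → Fin (k+1) :=
  fun i' e' => c i'.castSucc e'.castSucc

/-- Extension of a lower-dimensional simplex to a boundary simplex. -/
def extChain {m : ℕ} (c' : Fin (m+1) → Fin m → Fin (k+1)) :
    Fin (m+2) → Fin (m+1) → Fin (k+1) :=
  fun i => if h : (i:ℕ) = m+1 then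
      Fin.snoc (c' (Fin.last m)) ⟨min 1 k, Nat.lt_succ_of_le (Nat.min_le_right 1 k)⟩
    else Fin.snoc (c' ⟨(i:ℕ), Nat.lt_of_le_of_ne (Nat.le_of_lt_succ i.isLt) h⟩) 0

/-- The induced labelling on the bottom face. -/
noncomputable def lowL {m : ℕ} (ℓ : (Fin (m+1) → Fin (k+1)) → Fin (m+2)) :
    (Fin m → Fin (k+1)) → Fin (m+1) :=
  fun x' => ⟨min m (ℓ (Fin.snoc x' 0) : ℕ), Nat.lt_succ_of_le (Nat.min_le_left _ _)⟩

lemma lowL_val {m : ℕ} {ℓ : (Fin (m+1) → Fin (k+1)) → Fin (m+2)}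
    (h0 : ∀ x (d : Fin (m+1)), (x d : ℕ) = 0 → (ℓ x : ℕ) ≤ (d:ℕ)) (x' : Fin m → Fin (k+1)) :
    (lowL ℓ x' : ℕ) = (ℓ (Fin.snoc x' 0) : ℕ) := by
  have hb := h0 (Fin.snoc x' 0) (Fin.last m) (by rw [Fin.snoc_last]; rfl)
  rw [Fin.val_last] at hb
  simp only [lowL]
  omega

lemma cv_res {m : ℕ} (c : Fin (m+2) → Fin (m+1) → Fin (k+1)) {a : ℕ} (ha : a < m+1)
    (e' : Fin m) : cv (res c) a e' = cv c a (Fin.castSucc e') := by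
  rw [cv_eq _ ha, cv_eq _ (by omega)]
  rfl

lemma cv_extChain_lo {m : ℕ} (c' : Fin (m+1) → Fin m → Fin (k+1)) {a : ℕ} (ha : a < m+1)
    (e' : Fin m) : cv (extChain c') a (Fin.castSucc e') = cv c' a e' := by
  rw [cv_eq _ (show a < m+2 by omega), cv_eq _ ha, extChain, dif_neg (show ¬(a = m+1) by omega)]
  rw [Fin.snoc_castSucc]

lemma cv_extChain_lo_last {m : ℕ} (c' : Fin (m+1) → Fin m → Fin (k+1)) {a : ℕ}
    (ha : a < m+1) : cv (extChain c') a (Fin.last m) = 0 := by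
  rw [cv_eq _ (show a < m+2 by omega), extChain, dif_neg (show ¬(a = m+1) by omega)]
  rw [Fin.snoc_last]
  rfl

lemma cv_extChain_hi {m : ℕ} (c' : Fin (m+1) → Fin m → Fin (k+1)) (e' : Fin m) :
    cv (extChain c') (m+1) (Fin.castSucc e') = cv c' m e' := by
  rw [cv_eq _ (show m+1 < m+2 by omega), cv_eq _ (show m < m+1 by omega), extChain, dif_pos rfl]
  rw [Fin.snoc_castSucc]
  rfl

lemma cv_extChain_hi_last {m : ℕ} (hk : 1 ≤ k) (c' : Fin (m+1) → Fin m → Fin (k+1)) :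
    cv (extChain c') (m+1) (Fin.last m) = 1 := by
  rw [cv_eq _ (show m+1 < m+2 by omega), extChain, dif_pos rfl]
  rw [Fin.snoc_last]
  show min 1 k = 1
  omega

lemma mem_RS {nn : ℕ} {ℓ : (Fin nn → Fin (k+1)) → Fin (nn+1)}
    {c : Fin (nn+1) → Fin nn → Fin (k+1)} :
    c ∈ RS ℓ ↔ KChain c ∧ Function.Injective (ℓ ∘ c) := by
  constructor
  · intro h
    exact (Finset.mem_filter.mp h).2
  · intro h
    exact Finset.mem_filter.mpr ⟨Finset.mem_univ _, h⟩

lemma mem_BD {nn : ℕ} {ℓ : (Fin nn → Fin (k+1)) → Fin (nn+1)}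
    {p : (Fin (nn+1) → Fin nn → Fin (k+1)) × Fin (nn+1)} :
    p ∈ BD ℓ ↔ (KChain p.1 ∧ FRb ℓ p.1 p.2) ∧ ¬ interiorP p.1 p.2 := by
  constructor
  · intro h
    have h1 := Finset.mem_filter.mp h
    have h2 := Finset.mem_filter.mp h1.1
    exact ⟨h2.2, h1.2⟩
  · intro h
    exact Finset.mem_filter.mpr ⟨Finset.mem_filter.mpr ⟨Finset.mem_univ _, h.1⟩, h.2⟩

lemma card_BD {m : ℕ} (hk : 1 ≤ k) {ℓ : (Fin (m+1) → Fin (k+1)) → Fin (m+2)}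
    (h0 : ∀ x (d : Fin (m+1)), (x d : ℕ) = 0 → (ℓ x : ℕ) ≤ (d:ℕ))
    (hk' : ∀ x (d : Fin (m+1)), (x d : ℕ) = k → (ℓ x : ℕ) ≠ (d:ℕ)) :
    (BD ℓ).card = (RS (lowL ℓ)).card := by
  classical
  apply Finset.card_bij' (i := fun p _ => res p.1) (j := fun c' _ => (extChain c', Fin.last (m+1)))
  case hi =>
    intro p hp
    rw [mem_BD] at hp
    obtain ⟨⟨hc, hf⟩, hni⟩ := hp
    obtain ⟨hjl, hstep, hzero⟩ := bdry_struct hk h0 hk' hc hf hni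
    have hsnoc : ∀ i' : Fin (m+1), Fin.snoc (res p.1 i') 0 = p.1 i'.castSucc := by
      intro i'
      funext e
      induction e using Fin.lastCases with
      | last =>
        rw [Fin.snoc_last]
        apply Fin.ext
        have hz := hzero (i':ℕ) (Nat.le_of_lt_succ i'.isLt)
        have he : (p.1 i'.castSucc (Fin.last m) : ℕ) = cv p.1 (i':ℕ) (Fin.last m) :=
          cv_of_val p.1 i'.castSucc (by simp) (Fin.last m)
        simp only [Fin.val_zero]
        omega
      | cast e' =>
        rw [Fin.snoc_castSucc]
        rfl
    rw [mem_RS]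
    refine ⟨?_, ?_⟩
    · apply kchain_of_cv
      · intro a ha
        obtain ⟨d, hd⟩ := hc.step_cv (show a < m+1 by omega)
        have hdne : d ≠ Fin.last m := by
          intro hcon
          have h1 := hd (Fin.last m)
          rw [hcon, if_pos rfl] at h1
          have h2 := hzero a (by omega)
          have h3 := hzero (a+1) (by omega)
          omega
        have hdm : (d:ℕ) < m := by
          have h1 := d.isLt
          have h2 : (d:ℕ) ≠ m := by
            intro hcon
            exact hdne (Fin.ext (by simpa using hcon))
          omega
        refine ⟨⟨(d:ℕ), hdm⟩, fun e' => ?_⟩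
        rw [cv_res p.1 (by omega) e', cv_res p.1 (by omega) e']
        have := hd (Fin.castSucc e')
        rw [this]
        congr 1
        by_cases he : Fin.castSucc e' = d
        · rw [if_pos he, if_pos]
          apply Fin.ext
          have := congrArg Fin.val he
          simpa using this
        · rw [if_neg he, if_neg]
          intro hcon
          apply he
          apply Fin.ext
          have := congrArg Fin.val hcon
          simpa using this
      · intro e'
        rw [cv_res p.1 (by omega) e', cv_res p.1 (by omega) e']
        have h1 := hstep (Fin.castSucc e')
        rw [if_neg (Fin.castSucc_lt_last e').ne] at h1
        have h2 := hc.last_cv (Fin.castSucc e')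
        omega
    · intro i1 i2 h12
      have hv := congrArg Fin.val h12
      simp only [Function.comp_apply] at hv
      rw [lowL_val h0, lowL_val h0, hsnoc i1, hsnoc i2] at hv
      have h2 : ℓ (p.1 (p.2.succAbove i1)) = ℓ (p.1 (p.2.succAbove i2)) := by
        rw [hjl, Fin.succAbove_last]
        exact Fin.ext hv
      exact hf.2 h2
  case hj =>
    intro c' hc'
    rw [mem_RS] at hc'
    obtain ⟨hch, hinj⟩ := hc'
    have hlabel : ∀ i : Fin (m+1), (ℓ (extChain c' ((Fin.last (m+1)).succAbove i)) : ℕ)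
        = (lowL ℓ (c' i) : ℕ) := by
      intro i
      rw [Fin.succAbove_last]
      have hfun : extChain c' (Fin.castSucc i) = Fin.snoc (c' i) 0 := by
        rw [extChain]
        rw [dif_neg (by have := i.isLt; simp; omega)]
        congr 2
        all_goals (apply Fin.ext; simp)
      rw [hfun, lowL_val h0]
    rw [mem_BD]
    refine ⟨⟨?_, ?_⟩, ?_⟩
    · -- KChain
      apply kchain_of_cv
      · intro a ha
        by_cases ham : a = m
        · rw [ham]
          refine ⟨Fin.last m, fun e => ?_⟩
          induction e using Fin.lastCases with
          | last =>
            rw [cv_extChain_hi_last hk, cv_extChain_lo_last c' (by omega), if_pos rfl]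
          | cast e' =>
            rw [cv_extChain_hi, cv_extChain_lo c' (by omega), if_neg (Fin.castSucc_lt_last e').ne]
            omega
        · obtain ⟨d, hd⟩ := hch.step_cv (show a < m by omega)
          refine ⟨Fin.castSucc d, fun e => ?_⟩
          induction e using Fin.lastCases with
          | last =>
            rw [cv_extChain_lo_last c' (by omega), cv_extChain_lo_last c' (by omega),
              if_neg (Fin.castSucc_lt_last d).ne']
          | cast e' =>
            rw [cv_extChain_lo c' (by omega), cv_extChain_lo c' (by omega), hd e']
            congr 1
            by_cases he : e' = d
            · rw [if_pos he, if_pos (by rw [he])]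
            · rw [if_neg he, if_neg (fun hcon => he (Fin.castSucc_inj.mp hcon))]
      · intro e
        induction e using Fin.lastCases with
        | last => rw [cv_extChain_hi_last hk, cv_extChain_lo_last c' (by omega)]
        | cast e' =>
          rw [cv_extChain_hi, cv_extChain_lo c' (by omega)]
          exact hch.last_cv e'
    · -- FRb
      constructor
      · intro i hcon
        have := congrArg Fin.val hcon
        rw [hlabel i, Fin.val_last] at this
        have := (lowL ℓ (c' i)).isLt
        omega
      · intro i1 i2 h12
        have hv := congrArg Fin.val h12
        rw [hlabel i1, hlabel i2] at hv
        exact hinj (show (lowL ℓ ∘ c') i1 = (lowL ℓ ∘ c') i2 from Fin.ext hv)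
    · -- not interior
      rw [interiorP_last (Fin.val_last (m+1)) (by omega)]
      push_neg
      refine ⟨Fin.last m, ?_⟩
      rw [show m+1-1 = m by omega, cv_extChain_hi_last hk, cv_extChain_lo_last c' (by omega),
        cv_extChain_lo_last c' (by omega)]
      omega
  case left_inv =>
    intro p hp
    rw [mem_BD] at hp
    obtain ⟨⟨hc, hf⟩, hni⟩ := hp
    obtain ⟨hjl, hstep, hzero⟩ := bdry_struct hk h0 hk' hc hf hni
    have hfst : extChain (res p.1) = p.1 := by
      apply funext_chain
      intro a ha e
      induction e using Fin.lastCases with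
      | last =>
        by_cases ham : a = m+1
        · subst ham
          rw [cv_extChain_hi_last hk]
          have h1 := hstep (Fin.last m)
          rw [if_pos rfl] at h1
          have h2 := hzero m (by omega)
          omega
        · rw [cv_extChain_lo_last _ (by omega)]
          have := hzero a (by omega)
          omega
      | cast e' =>
        by_cases ham : a = m+1
        · subst ham
          rw [cv_extChain_hi, cv_res p.1 (by omega) e']
          have h1 := hstep (Fin.castSucc e')
          rw [if_neg (Fin.castSucc_lt_last e').ne] at h1
          omega
        · rw [cv_extChain_lo _ (by omega), cv_res p.1 (by omega) e']
    have : (extChain (res p.1), Fin.last (m+1)) = (p.1, p.2) := by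
      rw [hfst, hjl]
    simpa using this
  case right_inv =>
    intro c' hc'
    apply funext_chain
    intro a ha e'
    rw [cv_res _ (by omega) e', cv_extChain_lo c' (by omega) e']

theorem sperner_parity (hk : 1 ≤ k) :
    ∀ (n : ℕ) (ℓ : (Fin n → Fin (k+1)) → Fin (n+1)),
      (∀ x (d : Fin n), (x d : ℕ) = 0 → (ℓ x : ℕ) ≤ (d:ℕ)) →
      (∀ x (d : Fin n), (x d : ℕ) = k → (ℓ x : ℕ) ≠ (d:ℕ)) →
      ((RS ℓ).card : ZMod 2) = 1 := by
  intro n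
  induction n with
  | zero =>
    intro ℓ h0 hk'
    have huniv : RS ℓ = Finset.univ := by
      apply Finset.eq_univ_iff_forall.mpr
      intro c
      rw [mem_RS]
      exact ⟨⟨fun j => j.elim0, fun e => e.elim0⟩, fun a b hab => by omega⟩
    rw [huniv, Finset.card_univ]
    simp
  | succ m ih =>
    intro ℓ h0 hk'
    have hstep : ((RS ℓ).card : ZMod 2) = ((RS (lowL ℓ)).card : ZMod 2) := by
      rw [← cardT ℓ, cardT_eq_boundary (by omega) ℓ, card_BD hk h0 hk']
    rw [hstep]
    apply ih
    · intro x' d' h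
      have hres := h0 (Fin.snoc x' 0) (Fin.castSucc d') (by rwa [Fin.snoc_castSucc])
      rw [lowL_val h0]
      simpa using hres
    · intro x' d' h
      have hres := hk' (Fin.snoc x' 0) (Fin.castSucc d') (by rwa [Fin.snoc_castSucc])
      rw [lowL_val h0]
      simpa using hres

theorem sperner_exists (hk : 1 ≤ k) (n : ℕ) (ℓ : (Fin n → Fin (k+1)) → Fin (n+1))
    (h0 : ∀ x (d : Fin n), (x d : ℕ) = 0 → (ℓ x : ℕ) ≤ (d:ℕ))
    (hk' : ∀ x (d : Fin n), (x d : ℕ) = k → (ℓ x : ℕ) ≠ (d:ℕ)) :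
    ∃ c : Fin (n+1) → Fin n → Fin (k+1), KChain c ∧ Function.Injective (ℓ ∘ c) := by
  have hpar := sperner_parity hk n ℓ h0 hk'
  rcases (RS ℓ).eq_empty_or_nonempty with h | h
  · rw [h] at hpar
    simp at hpar
  · obtain ⟨c, hc⟩ := h
    rw [mem_RS] at hc
    exact ⟨c, hc⟩

/-- One step of an adjacency chain inside a colour class. -/
def StepRel {n k : ℕ} {ι : Type*} (col : (Fin n → Fin (k+1)) → ι)
    (x y : Fin n → Fin (k+1)) : Prop :=
  col x = col y ∧ ∀ e, (x e : ℕ) ≤ (y e : ℕ) + 1 ∧ (y e : ℕ) ≤ (x e : ℕ) + 1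

lemma stepRel_symm {n k : ℕ} {ι : Type*} (col : (Fin n → Fin (k+1)) → ι) :
    Symmetric (StepRel col) :=
  fun _ _ h => ⟨h.1.symm, fun e => ⟨(h.2 e).2, (h.2 e).1⟩⟩

/-- Discrete Lebesgue lemma: any colouring of the discrete `n`-cube with at most `n`
colours has a monochromatic component joining two opposite faces. -/
lemma cube_coloring {n k : ℕ} (hk : 1 ≤ k) {ι : Type*} [Fintype ι]
    (hι : Fintype.card ι ≤ n) (col : (Fin n → Fin (k+1)) → ι) :
    ∃ x y : Fin n → Fin (k+1), Relation.ReflTransGen (StepRel col) x y ∧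
      ∃ d : Fin n, (x d : ℕ) = 0 ∧ (y d : ℕ) = k := by
  classical
  by_contra H
  push_neg at H
  set P : (Fin n → Fin (k+1)) → Fin n → Prop := fun x d =>
    ∃ y, Relation.ReflTransGen (StepRel col) x y ∧ (y d : ℕ) = 0 with hP
  set ℓ : (Fin n → Fin (k+1)) → Fin (n+1) := fun x =>
    if h : (Finset.univ.filter (P x)).Nonempty then (Finset.min' _ h).castSucc
    else Fin.last n with hℓ
  have h0 : ∀ x (d : Fin n), (x d : ℕ) = 0 → (ℓ x : ℕ) ≤ (d:ℕ) := by
    intro x d hxd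
    have hd : d ∈ Finset.univ.filter (P x) :=
      Finset.mem_filter.mpr ⟨Finset.mem_univ _, ⟨x, Relation.ReflTransGen.refl, hxd⟩⟩
    have hne : (Finset.univ.filter (P x)).Nonempty := ⟨d, hd⟩
    rw [hℓ]
    simp only [dif_pos hne, Fin.coe_castSucc]
    exact Finset.min'_le _ _ hd
  have hk' : ∀ x (d : Fin n), (x d : ℕ) = k → (ℓ x : ℕ) ≠ (d:ℕ) := by
    intro x d hxd
    rw [hℓ]
    simp only []
    split_ifs with hne
    · intro hcon
      rw [Fin.coe_castSucc] at hcon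
      have hmem := Finset.min'_mem (Finset.univ.filter (P x)) hne
      have : Finset.min' _ hne = d := Fin.ext hcon
      rw [this] at hmem
      obtain ⟨y, hconn, hy0⟩ := (Finset.mem_filter.mp hmem).2
      exact (H y x ((@Relation.ReflTransGen.stdSymm _ (StepRel col) ⟨fun _ _ h => stepRel_symm col h⟩).symm _ _ hconn) d hy0) hxd
    · intro hcon
      rw [Fin.val_last] at hcon
      have := d.isLt
      omega
  have hinv : ∀ x x', Relation.ReflTransGen (StepRel col) x x' → ℓ x = ℓ x' := by
    intro x x' hconn
    have hPiff : ∀ d, P x d ↔ P x' d := by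
      intro d
      constructor
      · rintro ⟨y, hy, hy0⟩
        exact ⟨y, Relation.ReflTransGen.trans
          ((@Relation.ReflTransGen.stdSymm _ (StepRel col) ⟨fun _ _ h => stepRel_symm col h⟩).symm _ _ hconn) hy, hy0⟩
      · rintro ⟨y, hy, hy0⟩
        exact ⟨y, Relation.ReflTransGen.trans hconn hy, hy0⟩
    have hset : Finset.univ.filter (P x) = Finset.univ.filter (P x') := by
      apply Finset.filter_congr
      intro d _
      exact (by simpa using hPiff d)
    rw [hℓ]
    simp only [hset]
  obtain ⟨c, hc, hcinj⟩ := sperner_exists hk n ℓ h0 hk'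
  have hcard : Fintype.card ι < Fintype.card (Fin (n+1)) := by
    rw [Fintype.card_fin]
    omega
  obtain ⟨i₁, i₂, hne, hcol⟩ := Fintype.exists_ne_map_eq_of_card_lt (fun i => col (c i)) hcard
  have hstep : StepRel col (c i₁) (c i₂) := by
    refine ⟨hcol, fun e => ?_⟩
    have l1 := hc.lower_cv (a := (i₁:ℕ)) (Nat.le_of_lt_succ i₁.isLt) e
    have u1 := hc.upper_cv (a := (i₁:ℕ)) (Nat.le_of_lt_succ i₁.isLt) e
    have l2 := hc.lower_cv (a := (i₂:ℕ)) (Nat.le_of_lt_succ i₂.isLt) e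
    have u2 := hc.upper_cv (a := (i₂:ℕ)) (Nat.le_of_lt_succ i₂.isLt) e
    rw [cv_val] at l1 u1 l2 u2
    omega
  have : ℓ (c i₁) = ℓ (c i₂) := hinv _ _ (Relation.ReflTransGen.single hstep)
  exact hne (hcinj this)

lemma ChainIn.append {X : Type*} {dd : X → X → ℝ} {A : Set X} {r : ℝ} {x y z : X}
    (h : ChainIn dd A r x y) (hz : z ∈ A) (hdist : dd y z < r) : ChainIn dd A r x z := by
  obtain ⟨m, c, hmem, h0, hl, hs⟩ := h
  refine ⟨m+1, Fin.snoc c z, ?_, ?_, ?_, ?_⟩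
  · intro i
    induction i using Fin.lastCases with
    | last => rw [Fin.snoc_last]; exact hz
    | cast i' => rw [Fin.snoc_castSucc]; exact hmem i'
  · have h00 : (0 : Fin (m+2)) = Fin.castSucc 0 := rfl
    rw [h00, Fin.snoc_castSucc]
    exact h0
  · rw [Fin.snoc_last]
  · intro i
    induction i using Fin.lastCases with
    | last =>
      rw [Fin.succ_last, Fin.snoc_last, Fin.snoc_castSucc, hl]
      exact hdist
    | cast i' =>
      rw [Fin.succ_castSucc, Fin.snoc_castSucc, Fin.snoc_castSucc]
      exact hs i'

end Stmt3

/-- If `X` has an `(n-1)`-dimensional control function `D` and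
`f : {0,1,…,k}ⁿ → X` is an injective `r`-cube whose inverse is `L`-Lipschitz, then
`k ≤ D(n·r) · L`. -/
theorem statement_3 {X : Type*} [MetricSpace X] (n : ℕ) (hn : 1 ≤ n) (D : ℝ → ℝ≥0∞)
    (hD : IsControlFunction (dist : X → X → ℝ) (n - 1) D)
    (r : ℝ) (hr : 0 < r) (k : ℕ)
    (f : (Fin n → Fin (k + 1)) → X) (hf : IsRCube (dist : X → X → ℝ) r f)
    (hinj : Function.Injective f)
    (L : ℝ) (hL : 0 ≤ L)
    (hLip : ∀ a b : Fin n → Fin (k + 1), l1dist a b ≤ L * dist (f a) (f b)) :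
    (k : ℝ≥0∞) ≤ D (n * r) * ENNReal.ofReal L := by
  classical
  rcases Nat.eq_zero_or_pos k with hk0 | hk1
  · subst hk0
    simp
  have hnpos : (0:ℝ) < (n:ℝ) := by exact_mod_cast hn
  have hnr : (0:ℝ) < (n:ℝ) * r := mul_pos hnpos hr
  obtain ⟨P, hPcov, hPleb, hPdiam⟩ := hD ((n:ℝ) * r) hnr
  set col : (Fin n → Fin (k+1)) → Fin (n-1+1) := fun x => (hPleb (f x)).choose with hcol
  have hcolspec : ∀ x, {y | dist (f x) y < (n:ℝ)*r} ⊆ P (col x) :=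
    fun x => (hPleb (f x)).choose_spec
  have hself : ∀ x, f x ∈ P (col x) := by
    intro x
    apply hcolspec x
    simp only [Set.mem_setOf_eq, dist_self]
    exact hnr
  -- distance bound along lattice moves
  have hclaim : ∀ N : ℕ, ∀ x y : Fin n → Fin (k+1),
      (∑ e, ((x e:ℕ) - (y e:ℕ) + ((y e:ℕ) - (x e:ℕ)))) = N → 1 ≤ N →
      dist (f x) (f y) < (N:ℝ) * r := by
    intro N
    induction N with
    | zero => intro x y _ h; omega
    | succ M ih =>
      intro x y hsum hM
      have hex : ∃ e₀, (x e₀ : ℕ) ≠ (y e₀ : ℕ) := by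
        by_contra hall
        push_neg at hall
        have hz : (∑ e, ((x e:ℕ) - (y e:ℕ) + ((y e:ℕ) - (x e:ℕ)))) = 0 :=
          Finset.sum_eq_zero (fun e _ => by have := hall e; omega)
        omega
      obtain ⟨e₀, he₀⟩ := hex
      have key : ∃ x' : Fin n → Fin (k+1), dist (f x) (f x') < r ∧
          (∑ e, ((x' e:ℕ) - (y e:ℕ) + ((y e:ℕ) - (x' e:ℕ)))) = M := by
        rcases Nat.lt_or_ge (x e₀:ℕ) (y e₀:ℕ) with hdir | hdir
        · have hxk : (x e₀ : ℕ) < k := by have := (y e₀).isLt; omega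
          refine ⟨Function.update x e₀ ⟨(x e₀:ℕ)+1, Nat.succ_lt_succ hxk⟩,
            hf x e₀ hxk, ?_⟩
          rw [← Finset.add_sum_erase _ _ (Finset.mem_univ e₀)] at hsum ⊢
          have hrest : (∑ e ∈ Finset.univ.erase e₀,
              (((Function.update x e₀ ⟨(x e₀:ℕ)+1, Nat.succ_lt_succ hxk⟩) e : ℕ) - (y e:ℕ)
                + ((y e:ℕ) - ((Function.update x e₀ ⟨(x e₀:ℕ)+1, Nat.succ_lt_succ hxk⟩) e : ℕ))))
              = ∑ e ∈ Finset.univ.erase e₀, ((x e:ℕ) - (y e:ℕ) + ((y e:ℕ) - (x e:ℕ))) := by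
            apply Finset.sum_congr rfl
            intro e he
            rw [Function.update_of_ne (Finset.ne_of_mem_erase he)]
          rw [hrest]
          have hupd : ((Function.update x e₀ ⟨(x e₀:ℕ)+1, Nat.succ_lt_succ hxk⟩) e₀ : ℕ)
              = (x e₀:ℕ) + 1 := by rw [Function.update_self]
          rw [hupd]
          omega
        · have hx1 : 1 ≤ (x e₀ : ℕ) := by omega
          have hxk : (x e₀:ℕ) - 1 < k + 1 := by have := (x e₀).isLt; omega
          set x' := Function.update x e₀ ⟨(x e₀:ℕ)-1, hxk⟩ with hx'
          have hx'e : (x' e₀ : ℕ) = (x e₀:ℕ) - 1 := by rw [hx', Function.update_self]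
          have hx'k : (x' e₀ : ℕ) < k := by have := (x e₀).isLt; omega
          have hxeq : x = Function.update x' e₀ ⟨(x' e₀:ℕ)+1, Nat.succ_lt_succ hx'k⟩ := by
            funext e
            by_cases he : e = e₀
            · subst he
              apply Fin.ext
              rw [Function.update_self]
              simp only []
              omega
            · rw [Function.update_of_ne he, hx', Function.update_of_ne he]
          refine ⟨x', ?_, ?_⟩
          · rw [dist_comm]
            have := hf x' e₀ hx'k
            rw [← hxeq] at this
            exact this
          · rw [← Finset.add_sum_erase _ _ (Finset.mem_univ e₀)] at hsum ⊢
            have hrest : (∑ e ∈ Finset.univ.erase e₀,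
                ((x' e : ℕ) - (y e:ℕ) + ((y e:ℕ) - (x' e : ℕ))))
                = ∑ e ∈ Finset.univ.erase e₀, ((x e:ℕ) - (y e:ℕ) + ((y e:ℕ) - (x e:ℕ))) := by
              apply Finset.sum_congr rfl
              intro e he
              rw [hx', Function.update_of_ne (Finset.ne_of_mem_erase he)]
            rw [hrest, hx'e]
            omega
      obtain ⟨x', hd1, hsum'⟩ := key
      rcases Nat.eq_zero_or_pos M with hM0 | hM1
      · have hxy' : x' = y := by
          subst hM0
          funext e
          apply Fin.ext
          have := (Finset.sum_eq_zero_iff.mp hsum') e (Finset.mem_univ e)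
          omega
        rw [← hxy', hM0]
        push_cast
        linarith
      · have h2 := ih x' y hsum' hM1
        have tri := dist_triangle (f x) (f x') (f y)
        have hexp : ((M+1:ℕ):ℝ) * r = (M:ℝ)*r + r := by push_cast; ring
        rw [hexp]
        linarith
  have hadj : ∀ x y : Fin n → Fin (k+1),
      (∀ e, (x e:ℕ) ≤ (y e:ℕ) + 1 ∧ (y e:ℕ) ≤ (x e:ℕ) + 1) →
      dist (f x) (f y) < (n:ℝ)*r := by
    intro x y hxy
    have hNn : (∑ e, ((x e:ℕ) - (y e:ℕ) + ((y e:ℕ) - (x e:ℕ)))) ≤ n := by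
      calc (∑ e, ((x e:ℕ) - (y e:ℕ) + ((y e:ℕ) - (x e:ℕ)))) ≤ ∑ _e : Fin n, 1 :=
            Finset.sum_le_sum (fun e _ => by have := hxy e; omega)
        _ = n := by simp
    rcases Nat.eq_zero_or_pos (∑ e, ((x e:ℕ) - (y e:ℕ) + ((y e:ℕ) - (x e:ℕ)))) with h0 | h1
    · have hxy' : x = y := by
        funext e
        apply Fin.ext
        have := (Finset.sum_eq_zero_iff.mp h0) e (Finset.mem_univ e)
        omega
      rw [hxy', dist_self]
      exact hnr
    · have hlt := hclaim _ x y rfl h1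
      have hcast : (((∑ e, ((x e:ℕ) - (y e:ℕ) + ((y e:ℕ) - (x e:ℕ)))) : ℕ) : ℝ) ≤ (n:ℝ) :=
        Nat.cast_le.mpr hNn
      have := mul_le_mul_of_nonneg_right hcast hr.le
      linarith
  -- apply the discrete Lebesgue lemma
  obtain ⟨x, y, hconn, d, hx0, hyk⟩ := Stmt3.cube_coloring hk1
    (ι := Fin (n-1+1)) (by rw [Fintype.card_fin]; omega) col
  -- build the chain in P (col x)
  have hchain : ∀ z, Relation.ReflTransGen (Stmt3.StepRel col) x z →
      col z = col x ∧ ChainIn (dist : X → X → ℝ) (P (col x)) ((n:ℝ)*r) (f x) (f z) := by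
    intro z hconn'
    induction hconn' with
    | refl =>
      exact ⟨rfl, 0, fun _ => f x, fun _ => hself x, rfl, rfl, fun i => i.elim0⟩
    | @tail b c hab hbc ih =>
      obtain ⟨hcb, hch⟩ := ih
      have hcc : col c = col x := by rw [← hbc.1]; exact hcb
      refine ⟨hcc, ?_⟩
      apply Stmt3.ChainIn.append hch
      · rw [← hcc]; exact hself c
      · exact hadj b c hbc.2
  obtain ⟨hcyx, hch⟩ := hchain y hconn
  have hfy : f y ∈ P (col x) := by rw [← hcyx]; exact hself y
  have hdiam := hPdiam (col x) (f x) (hself x) (f y) hfy hch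
  -- l1 distance bound
  have hkl1 : (k:ℝ) ≤ l1dist x y := by
    rw [l1dist]
    have hterm : (k:ℝ) ≤ |((x d : ℕ):ℝ) - ((y d : ℕ):ℝ)| := by
      rw [hx0, hyk]
      rw [show ((0:ℕ):ℝ) - ((k:ℕ):ℝ) = -(k:ℝ) by push_cast; ring]
      rw [abs_neg, abs_of_nonneg (by positivity)]
    refine le_trans hterm ?_
    exact Finset.single_le_sum (f := fun e => |((x e:ℕ):ℝ) - ((y e:ℕ):ℝ)|)
      (fun e _ => abs_nonneg _) (Finset.mem_univ d)
  have hkL : (k:ℝ) ≤ L * dist (f x) (f y) := le_trans hkl1 (hLip x y)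
  calc (k : ℝ≥0∞) = ENNReal.ofReal ((k:ℕ):ℝ) := by rw [ENNReal.ofReal_natCast]
    _ ≤ ENNReal.ofReal (L * dist (f x) (f y)) := ENNReal.ofReal_le_ofReal hkL
    _ = ENNReal.ofReal (dist (f x) (f y)) * ENNReal.ofReal L := by
        rw [ENNReal.ofReal_mul hL, mul_comm]
    _ ≤ D ((n:ℝ) * r) * ENNReal.ofReal L := mul_le_mul_left hdiam _


end
end

section
/- Let H ≠ 1 be a finite group and G a finitely generated group, and equip H≀G with the word metric with respect to the generating set (H∖{1}) ∪ S, where S is a finite generating set of G. Let K be the kernel of the projection H≀G → G. For every r > 1, every element of K of word length less than r is a product of bulbs indexed by elements of G of word length less than r. -/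
open Function SemidirectProduct ENNReal

noncomputable section

variable (H G : Type*) [Group H] [Group G]

/-!
A geodesic word for `x` can be rewritten, by pushing its `G`-letters to the right, as a product of
bulbs followed by the `G`-part of `x`, which is trivial for `x ∈ K`. The lamp letter `a` at
position `k` becomes the bulb indexed by the `G`-part of the first `k - 1` letters, an element of
word length less than the length of the word.
-/

def IsWord {G : Type*} [Group G] (S : Set G) (w : List G) : Prop :=
  ∀ x ∈ w, x ∈ S ∨ x⁻¹ ∈ S

section WordLength

variable {G : Type*} [Group G] {S : Set G}

theorem wordLength_le_length {w : List G} (hw : IsWord S w) : wordLength S w.prod ≤ w.length :=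
  Nat.sInf_le ⟨w, rfl, hw, rfl⟩

theorem exists_word_length_eq_wordLength {g : G} (hg : g ∈ Subgroup.closure S) :
    ∃ w : List G, IsWord S w ∧ w.prod = g ∧ w.length = wordLength S g := by
  have hg' : g ∈ Submonoid.closure (S ∪ S⁻¹) := by rwa [← Subgroup.closure_toSubmonoid]
  obtain ⟨w, hw, rfl⟩ := Submonoid.exists_list_of_mem_closure hg'
  have hne : {m | ∃ v : List G, v.length = m ∧ IsWord S v ∧ v.prod = w.prod}.Nonempty :=
    ⟨w.length, w, rfl, fun x hx => (Set.mem_union _ _ _).mp (hw x hx), rfl⟩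
  obtain ⟨v, hlen, hv, hprod⟩ := Nat.sInf_mem hne
  exact ⟨v, hv, hprod, hlen⟩

end WordLength

namespace Wreath

variable {H G : Type*} [Group H] [Group G]

theorem atOne_inv (a : H) : atOne H G a⁻¹ = (atOne H G a)⁻¹ := by
  ext x
  simp only [atOne, Subgroup.coe_inv, Pi.inv_apply]
  split_ifs <;> simp

theorem atOne_one : atOne H G (1 : H) = 1 := by
  ext x
  simp [atOne]

theorem wreathAct_atOne_apply [DecidableEq G] (γ : G) (a : H) :
    (wreathAct H G γ (atOne H G a)).1 = Pi.mulSingle γ a := by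
  funext x
  simp [wreathAct, wreathShift, atOne, Pi.mulSingle_apply, inv_mul_eq_one, eq_comm]

theorem bulb_eq_inl (g : G) (a : H) : bulb H G g a = inl (wreathAct H G g (atOne H G a)) := by
  rw [bulb, ← map_inv, ← inl_aut]

theorem bulb_one_left (a : H) : bulb H G 1 a = inl (atOne H G a) := by
  simp [bulb]

theorem conj_bulb (t g : G) (a : H) :
    MulAut.conj (inr t : Wreath H G) (bulb H G g a) = bulb H G (t * g) a := by
  simp only [MulAut.conj_apply, bulb, map_mul]
  group

variable (S : Set G)

theorem inr_mem_closure_wreathGen (hS : Subgroup.closure S = ⊤) (g : G) :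
    (inr g : Wreath H G) ∈ Subgroup.closure (wreathGen H G S) := by
  have hg : (inr g : Wreath H G) ∈ (Subgroup.closure S).map (inr : G →* Wreath H G) :=
    ⟨g, hS ▸ Subgroup.mem_top g, rfl⟩
  rw [MonoidHom.map_closure] at hg
  refine Subgroup.closure_mono ?_ hg
  rintro _ ⟨s, hs, rfl⟩
  exact Or.inr ⟨s, hs, rfl⟩

theorem bulb_mem_closure_wreathGen (hS : Subgroup.closure S = ⊤) (g : G) (a : H) :
    bulb H G g a ∈ Subgroup.closure (wreathGen H G S) := by
  have ha : (inl (atOne H G a) : Wreath H G) ∈ Subgroup.closure (wreathGen H G S) := by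
    rcases eq_or_ne a 1 with rfl | ha
    · simp [atOne_one]
    · exact Subgroup.subset_closure (Or.inl ⟨a, ha, rfl⟩)
  have hg := inr_mem_closure_wreathGen (H := H) S hS g
  exact mul_mem (mul_mem hg ha) (inv_mem hg)

/-- Dividing `f` by the bulb carrying its value at `γ` removes `γ` from the support. -/
theorem inl_mem_closure_wreathGen (hS : Subgroup.closure S = ⊤) (f : WreathBase H G) :
    (inl f : Wreath H G) ∈ Subgroup.closure (wreathGen H G S) := by
  classical
  suffices h : ∀ (s : Finset G) (f : WreathBase H G), mulSupport f.1 ⊆ s →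
      (inl f : Wreath H G) ∈ Subgroup.closure (wreathGen H G S) from
    h f.2.toFinset f (Set.Finite.coe_toFinset f.2).symm.subset
  intro s
  induction s using Finset.induction_on with
  | empty =>
    intro f hf
    have hf1 : f = 1 := Subtype.ext (mulSupport_eq_empty_iff.mp (by simpa using hf))
    simp [hf1]
  | insert γ s _ ih =>
    intro f hf
    set d := wreathAct H G γ (atOne H G (f.1 γ))
    have hd : d.1 = Pi.mulSingle γ (f.1 γ) := wreathAct_atOne_apply (H := H) γ _
    have hrest : mulSupport (d⁻¹ * f).1 ⊆ s := by
      intro x hx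
      have hx' : (d.1 x)⁻¹ * f.1 x ≠ 1 := hx
      by_cases hxγ : x = γ
      · simp [hd, hxγ] at hx'
      · have hfx : x ∈ mulSupport f.1 := by simpa [hd, hxγ] using hx'
        simpa [hxγ] using hf hfx
    rw [← mul_inv_cancel_left d f, map_mul]
    refine mul_mem ?_ (ih _ hrest)
    rw [← bulb_eq_inl]
    exact bulb_mem_closure_wreathGen S hS γ _

theorem closure_wreathGen (hS : Subgroup.closure S = ⊤) :
    Subgroup.closure (wreathGen H G S) = ⊤ := by
  refine eq_top_iff.mpr fun y _ => ?_
  rw [← inl_left_mul_inr_right y]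
  exact mul_mem (inl_mem_closure_wreathGen S hS _) (inr_mem_closure_wreathGen S hS _)

theorem wreathGen_letter_cases {l : Wreath H G}
    (hl : l ∈ wreathGen H G S ∨ l⁻¹ ∈ wreathGen H G S) :
    (∃ a : H, a ≠ 1 ∧ l = inl (atOne H G a)) ∨ ∃ t : G, (t ∈ S ∨ t⁻¹ ∈ S) ∧ l = inr t := by
  rcases hl with (⟨a, ha, rfl⟩ | ⟨s, hs, rfl⟩) | (⟨a, ha, hl⟩ | ⟨s, hs, hl⟩)
  · exact Or.inl ⟨a, ha, rfl⟩
  · exact Or.inr ⟨s, Or.inl hs, rfl⟩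
  · refine Or.inl ⟨a⁻¹, inv_ne_one.mpr ha, ?_⟩
    rw [atOne_inv, map_inv, ← hl, inv_inv]
  · refine Or.inr ⟨s⁻¹, Or.inr (by rwa [inv_inv]), ?_⟩
    rw [map_inv, ← hl, inv_inv]

/-- Reading the word from the right, a letter `a ∈ H` contributes the bulb `(1, a)` and a letter
`t ∈ S^{±1}` conjugates the bulbs collected so far, multiplying their indices by `t` on the left. -/
theorem exists_bulbs_of_isWord {w : List (Wreath H G)} (hw : IsWord (wreathGen H G S) w) :
    ∃ L : List (G × H), (∀ p ∈ L, p.2 ≠ 1 ∧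
        ∃ v : List G, IsWord S v ∧ v.prod = p.1 ∧ v.length < w.length) ∧
      w.prod = (L.map fun p => bulb H G p.1 p.2).prod * inr (rightHom w.prod) := by
  induction w with
  | nil => exact ⟨[], by simp, by simp⟩
  | cons l w ih =>
    obtain ⟨L, hL, hprod⟩ := ih fun z hz => hw z (List.mem_cons_of_mem _ hz)
    rcases wreathGen_letter_cases S (hw l List.mem_cons_self) with
      ⟨a, ha, rfl⟩ | ⟨t, ht, rfl⟩
    · refine ⟨(1, a) :: L, ?_, ?_⟩
      · rintro p (_ | ⟨_, hp⟩)
        · exact ⟨ha, [], fun _ h => absurd h List.not_mem_nil, rfl, by simp⟩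
        · obtain ⟨hp2, v, hv, hvp, hvl⟩ := hL p hp
          exact ⟨hp2, v, hv, hvp, hvl.trans (by simp)⟩
      · simp only [List.prod_cons, map_mul, rightHom_inl, one_mul, List.map_cons,
          bulb_one_left, mul_assoc, ← hprod]
    · refine ⟨L.map fun p => (t * p.1, p.2), ?_, ?_⟩
      · simp only [List.mem_map]
        rintro _ ⟨p, hp, rfl⟩
        obtain ⟨hp2, v, hv, hvp, hvl⟩ := hL p hp
        refine ⟨hp2, t :: v, ?_, by simp [hvp], by simpa using hvl⟩
        rintro z (_ | ⟨_, hz⟩)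
        exacts [ht, hv z hz]
      · have hconj : ((L.map fun p => (t * p.1, p.2)).map fun p => bulb H G p.1 p.2).prod =
            MulAut.conj (inr t : Wreath H G) (L.map fun p => bulb H G p.1 p.2).prod := by
          simp only [map_list_prod, List.map_map, Function.comp_def, conj_bulb]
        rw [hconj, MulAut.conj_apply, List.prod_cons, map_mul, rightHom_inr]
        nth_rw 1 [hprod]
        simp only [map_mul]
        group

theorem exists_bulbs_of_mem_ker (hS : Subgroup.closure S = ⊤) {x : Wreath H G}
    (hx : x ∈ (rightHom : Wreath H G →* G).ker) :
    ∃ L : List (G × H), (∀ p ∈ L, p.2 ≠ 1 ∧ wordLength S p.1 < wordLength (wreathGen H G S) x) ∧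
      x = (L.map fun p => bulb H G p.1 p.2).prod := by
  have hxgen : x ∈ Subgroup.closure (wreathGen H G S) :=
    closure_wreathGen (H := H) S hS ▸ Subgroup.mem_top x
  obtain ⟨w, hw, rfl, hlen⟩ := exists_word_length_eq_wordLength hxgen
  obtain ⟨L, hL, hprod⟩ := exists_bulbs_of_isWord S hw
  refine ⟨L, fun p hp => ?_, by rw [hprod, MonoidHom.mem_ker.mp hx, map_one, mul_one]⟩
  obtain ⟨hp2, v, hv, hvp, hvl⟩ := hL p hp
  exact ⟨hp2, hvp ▸ hlen ▸ (wordLength_le_length hv).trans_lt hvl⟩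

end Wreath

theorem statement_5_general {H G : Type*} [Group H] [Group G]
    (S : Set G) (hSgen : Subgroup.closure S = ⊤)
    (r : ℝ)
    (x : Wreath H G) (hx : x ∈ (rightHom : Wreath H G →* G).ker)
    (hlen : (wordLength (wreathGen H G S) x : ℝ) < r) :
    ∃ (m : ℕ) (gs : Fin m → G) (as : Fin m → H),
      (∀ i, as i ≠ 1) ∧ (∀ i, (wordLength S (gs i) : ℝ) < r) ∧
      x = (List.ofFn fun i => bulb H G (gs i) (as i)).prod := by
  obtain ⟨L, hL, rfl⟩ := Wreath.exists_bulbs_of_mem_ker S hSgen hx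
  refine ⟨L.length, fun i => L[i].1, fun i => L[i].2, fun i => (hL _ (List.getElem_mem _)).1,
    fun i => lt_trans (by exact_mod_cast (hL _ (List.getElem_mem _)).2) hlen, ?_⟩
  exact congrArg List.prod (List.ofFn_getElem_eq_map L _).symm

/-- In `H ≀ G` (`H ≠ 1` finite, `G` finitely generated) with the word metric of
the generating set `(H ∖ {1}) ∪ S`, any element of the kernel `K` of `H ≀ G → G` of word length
less than `r > 1` is a product of bulbs indexed by elements of `G` of word length less than `r`. -/
theorem statement_5 {H G : Type*} [Group H] [Finite H] [Nontrivial H] [Group G]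
    (S : Set G) (hSfin : S.Finite) (hSgen : Subgroup.closure S = ⊤)
    (r : ℝ) (hr : 1 < r)
    (x : Wreath H G) (hx : x ∈ (rightHom : Wreath H G →* G).ker)
    (hlen : (wordLength (wreathGen H G S) x : ℝ) < r) :
    ∃ (m : ℕ) (gs : Fin m → G) (as : Fin m → H),
      (∀ i, as i ≠ 1) ∧ (∀ i, (wordLength S (gs i) : ℝ) < r) ∧
      x = (List.ofFn fun i => bulb H G (gs i) (as i)).prod :=
  statement_5_general S hSgen r x hx hlen

end
end

section
/- Let H be a finite group and G a finitely generated group containing an element t generating an infinite cyclic subgroup ℤ of finite index n, together with elements g₁,…,gₙ such that every g ∈ G can be expressed as g = gᵢ·t^{e(g)} for some i and some integer e(g). Equip H≀G with the word metric with respect to the generating set (H∖{1}) ∪ {t, g₁,…,gₙ}. Then: (1) every element of the kernel K of H≀G → G can be expressed as a product of (hᵢ, aᵢ)-bulbs, i = 1,…,k, with hᵢ ≠ h_j for i ≠ j; and (2) the word length of such a product is at most n·(k + 2 + 4·max_i |e(hᵢ)|). -/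
open Function SemidirectProduct ENNReal

noncomputable section

variable (H G : Type*) [Group H] [Group G]

variable {H G}

def sig (g : G) (a : H) : WreathBase H G := wreathAct H G g (atOne H G a)

lemma sig_apply' (g : G) (a : H) (x : G) :
    (sig g a : G → H) x = (letI := Classical.decEq G; if g⁻¹ * x = 1 then a else 1) := by
  simp [sig, wreathAct, wreathShift, atOne]

lemma sig_apply_eq (g : G) (a : H) : (sig g a : G → H) g = a := by
  rw [sig_apply']
  simp

lemma sig_apply_ne (g : G) (a : H) {x : G} (hx : x ≠ g) : (sig g a : G → H) x = 1 := by
  rw [sig_apply']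
  rw [if_neg (by simpa [inv_mul_eq_one, eq_comm] using hx)]

lemma bulb_eq_inl (g : G) (a : H) : bulb H G g a = inl (sig g a) := by
  rw [bulb, sig, inl_aut, map_inv]

lemma atOne_one : atOne H G (1 : H) = 1 := by
  refine Subtype.ext (funext fun x => ?_)
  simp [atOne]

lemma bulb_one (g : G) : bulb H G g (1 : H) = 1 := by
  simp [bulb, atOne_one]

lemma bulb_base (a : H) : bulb H G (1 : G) a = inl (atOne H G a) := by
  simp [bulb]

lemma bulb_conj (b g : G) (a : H) :
    inr b * (bulb H G g a * (inr b : Wreath H G)⁻¹) = bulb H G (b * g) a := by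
  simp [bulb, map_mul, mul_inv_rev, mul_assoc]

lemma wprod_apply (l : List (WreathBase H G)) (x : G) :
    (l.prod : G → H) x = (l.map fun b : WreathBase H G => (b : G → H) x).prod := by
  simpa using map_list_prod ((Pi.evalMonoidHom (fun _ : G => H) x).comp (WreathBase H G).subtype) l

lemma inl_ofFn_prod {k : ℕ} (f : Fin k → WreathBase H G) :
    (List.ofFn fun i => (inl (f i) : Wreath H G)).prod = inl (List.ofFn f).prod := by
  rw [map_list_prod (inl : WreathBase H G →* Wreath H G), List.map_ofFn]
  rfl

lemma ofFn_prod_one {M : Type*} [Monoid M] {k : ℕ} {f : Fin k → M}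
    (hf : ∀ i, f i = 1) : (List.ofFn f).prod = 1 :=
  List.prod_eq_one (List.forall_mem_ofFn_iff.2 hf)

lemma ofFn_prod_onehot {M : Type*} [Monoid M] :
    ∀ {k : ℕ} (f : Fin k → M) (i0 : Fin k), (∀ i, i ≠ i0 → f i = 1) →
      (List.ofFn f).prod = f i0 := by
  intro k
  induction k with
  | zero => exact fun f i0 => i0.elim0
  | succ k ih =>
    intro f i0 hf
    rw [List.ofFn_succ, List.prod_cons]
    rcases Fin.eq_zero_or_eq_succ i0 with rfl | ⟨j, rfl⟩
    · rw [ofFn_prod_one fun i => hf i.succ (Fin.succ_ne_zero i), mul_one]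
    · rw [hf 0 (Fin.succ_ne_zero j).symm, one_mul]
      exact ih (fun i => f i.succ) j fun i hi => hf i.succ fun hc => hi (Fin.succ_injective _ hc)

lemma conj_ofFn_bulb (b : G) {N : ℕ} (p : Fin N → G) (d : Fin N → H) :
    inr b * ((List.ofFn fun m => bulb H G (p m) (d m)).prod * (inr b : Wreath H G)⁻¹) =
      (List.ofFn fun m => bulb H G (b * p m) (d m)).prod := by
  have := map_list_prod (MulAut.conj (inr b : Wreath H G)) (List.ofFn fun m => bulb H G (p m) (d m))
  rw [List.map_ofFn] at this
  simpa [Function.comp_def, MulAut.conj_apply, mul_assoc, bulb_conj] using this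

/-- Number of nontrivial deposits among positions `0..N`. -/
noncomputable def cnt {H : Type*} [Group H] (N : ℕ) (d : ℕ → H) : ℕ :=
  (@Finset.filter _ (fun m : Fin (N + 1) => d m ≠ 1)
    (fun m => @instDecidableNot _ (Classical.propDecidable _)) Finset.univ).card

lemma sweep (S : Set G) (u : G)
    (hu : (inr u : Wreath H G) ∈ wreathGen H G S ∨ (inr u : Wreath H G)⁻¹ ∈ wreathGen H G S)
    (N : ℕ) (d : ℕ → H) :
    ∃ w : List (Wreath H G),
      (∀ y ∈ w, y ∈ wreathGen H G S ∨ y⁻¹ ∈ wreathGen H G S) ∧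
      w.length ≤ 2 * N + cnt N d ∧
      w.prod = (List.ofFn fun m : Fin (N + 1) => bulb H G (u ^ (m : ℕ)) (d m)).prod := by
  classical
  induction N generalizing d with
  | zero =>
    by_cases h0 : d 0 = 1
    · exact ⟨[], by simp, by simp, by simp [List.ofFn_succ, h0, bulb_one]⟩
    · refine ⟨[inl (atOne H G (d 0))], ?_, ?_, ?_⟩
      · intro y hy
        rw [List.mem_singleton] at hy
        subst hy
        exact Or.inl (Or.inl ⟨d 0, h0, rfl⟩)
      · have h1 : cnt 0 d = 1 := by
          unfold cnt
          rw [Finset.card_filter, Fin.sum_univ_one]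
          simp [h0]
        simp [h1]
      · simp [List.ofFn_succ, bulb_base]
  | succ N ih =>
    obtain ⟨w', hw'1, hw'2, hw'3⟩ := ih (fun m => d (m + 1))
    have hlet : ∀ y ∈ [(inr u : Wreath H G)] ++ w' ++ [(inr u : Wreath H G)⁻¹],
        y ∈ wreathGen H G S ∨ y⁻¹ ∈ wreathGen H G S := by
      intro y hy
      simp only [List.mem_append, List.mem_singleton] at hy
      rcases hy with (hy | hy) | hy
      · subst hy; exact hu
      · exact hw'1 y hy
      · subst hy
        rcases hu with hu | hu
        · exact Or.inr (by rw [inv_inv]; exact hu)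
        · exact Or.inl hu
    have hmid : ([(inr u : Wreath H G)] ++ w' ++ [(inr u : Wreath H G)⁻¹]).prod =
        (List.ofFn fun m : Fin (N + 1) => bulb H G (u ^ ((m : ℕ) + 1)) (d ((m : ℕ) + 1))).prod := by
      have hsh : ([(inr u : Wreath H G)] ++ w' ++ [(inr u : Wreath H G)⁻¹]).prod =
          inr u * (w'.prod * (inr u : Wreath H G)⁻¹) := by
        simp [List.prod_append, mul_assoc]
      rw [hsh, hw'3, conj_ofFn_bulb u (fun m : Fin (N + 1) => u ^ (m : ℕ)) (fun m => d (m + 1))]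
      refine congrArg List.prod (congrArg List.ofFn (funext fun m => ?_))
      rw [← pow_succ']
    have step : (List.ofFn fun m : Fin (N + 2) => bulb H G (u ^ (m : ℕ)) (d m)).prod =
        bulb H G (u ^ (0 : ℕ)) (d 0) *
          (List.ofFn fun m : Fin (N + 1) => bulb H G (u ^ ((m : ℕ) + 1)) (d ((m : ℕ) + 1))).prod := by
      rw [List.ofFn_succ, List.prod_cons]
      simp [Fin.val_succ]
    by_cases h0 : d 0 = 1
    · have hcard : cnt (N + 1) d = cnt N (fun m => d (m + 1)) := by
        unfold cnt
        rw [Finset.card_filter, Finset.card_filter, Fin.sum_univ_succ]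
        simp [h0, Fin.val_succ]
      refine ⟨[(inr u : Wreath H G)] ++ w' ++ [(inr u : Wreath H G)⁻¹], hlet, ?_, ?_⟩
      · simp only [List.length_append, List.length_cons, List.length_nil]
        rw [hcard]
        omega
      · rw [hmid, step, pow_zero, h0, bulb_one, one_mul]
    · refine ⟨inl (atOne H G (d 0)) :: ([(inr u : Wreath H G)] ++ w' ++ [(inr u : Wreath H G)⁻¹]),
        ?_, ?_, ?_⟩
      · intro y hy
        rw [List.mem_cons] at hy
        rcases hy with hy | hy
        · subst hy; exact Or.inl (Or.inl ⟨d 0, h0, rfl⟩)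
        · exact hlet y hy
      · have hcard : cnt (N + 1) d = 1 + cnt N (fun m => d (m + 1)) := by
          unfold cnt
          rw [Finset.card_filter, Finset.card_filter, Fin.sum_univ_succ]
          simp [h0, Fin.val_succ]
        simp only [List.length_append, List.length_cons, List.length_nil]
        rw [hcard]
        omega
      · rw [List.prod_cons, hmid, step, pow_zero, bulb_base]

lemma cnt_le_card {H : Type*} [Group H] {N : ℕ} (d : ℕ → H) {β : Type*} (T : Finset β)
    (f : Fin (N + 1) → β) (hmap : ∀ m : Fin (N + 1), d m ≠ 1 → f m ∈ T)
    (hinj : ∀ m1 m2 : Fin (N + 1), d m1 ≠ 1 → d m2 ≠ 1 → f m1 = f m2 → m1 = m2) :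
    cnt N d ≤ T.card := by
  classical
  unfold cnt
  refine Finset.card_le_card_of_injOn f ?_ ?_
  · intro m hm
    rw [Finset.mem_coe, Finset.mem_filter] at hm
    exact hmap m hm.2
  · intro m1 hm1 m2 hm2 heq
    rw [Finset.mem_coe, Finset.mem_filter] at hm1 hm2
    exact hinj m1 m2 hm1.2 hm2.2 heq

/-- Suppose `H` is finite and `G` has an element `t` of infinite order whose
cyclic subgroup has finite index `n`, with elements `g₁,…,gₙ` so that every `x ∈ G` is
`gᵢ · t^{e(x)}`.  With the word metric of the generating set `(H∖{1}) ∪ {t, g₁,…,gₙ}` on `H ≀ G`: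
(1) every element of the kernel `K` of `H ≀ G → G` is a product of `(hᵢ,aᵢ)`-bulbs with mutually
distinct `hᵢ`; (2) any such product has word length at most `n·(k + 2 + 4·maxᵢ |e(hᵢ)|)`. -/
theorem statement_6 {H G : Type*} [Group H] [Finite H] [Group G]
    (t : G) (ht : ¬IsOfFinOrder t)
    (n : ℕ) (hn : 0 < n) (hidx : (Subgroup.zpowers t).index = n)
    (g : Fin n → G) (e : G → ℤ)
    (he : ∀ x : G, ∃ i : Fin n, x = g i * t ^ e x)
    (S : Set G) (hSdef : S = {t} ∪ Set.range g) :
    (∀ x : Wreath H G, x ∈ (rightHom : Wreath H G →* G).ker →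
      ∃ (k : ℕ) (h : Fin k → G) (a : Fin k → H), Function.Injective h ∧ (∀ i, a i ≠ 1) ∧
        x = (List.ofFn fun i => bulb H G (h i) (a i)).prod) ∧
    (∀ (k : ℕ) (h : Fin k → G) (a : Fin k → H), Function.Injective h → (∀ i, a i ≠ 1) →
      wordLength (wreathGen H G S) (List.ofFn fun i => bulb H G (h i) (a i)).prod ≤
        n * (k + 2 + 4 * Finset.univ.sup fun i => (e (h i)).natAbs)) := by
  constructor
  · -- Part 1
    intro x hx
    rw [← range_inl_eq_ker_rightHom] at hx
    obtain ⟨f, rfl⟩ := hx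
    classical
    have hfin : (Function.mulSupport (f : G → H)).Finite := f.2
    set s := hfin.toFinset with hs
    set h : Fin s.card → G := fun i => ((s.equivFin.symm i : { x // x ∈ s }) : G) with hh
    have hinj : Function.Injective h := fun i j hij => s.equivFin.symm.injective (Subtype.ext hij)
    have hmem : ∀ i, h i ∈ s := fun i => (s.equivFin.symm i).2
    have ha : ∀ i, (f : G → H) (h i) ≠ 1 := fun i => hfin.mem_toFinset.1 (hmem i)
    refine ⟨s.card, h, fun i => (f : G → H) (h i), hinj, ha, ?_⟩
    rw [show (List.ofFn fun i => bulb H G (h i) ((f : G → H) (h i))).prod =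
        inl (List.ofFn fun i => sig (h i) ((f : G → H) (h i))).prod from by
      simp only [bulb_eq_inl]; exact inl_ofFn_prod _]
    refine congrArg inl ?_
    refine Subtype.ext (funext fun x => ?_)
    rw [wprod_apply, List.map_ofFn]
    simp only [Function.comp_def]
    by_cases hx1 : (f : G → H) x = 1
    · rw [hx1]
      symm
      apply ofFn_prod_one
      intro i
      by_cases hxi : x = h i
      · subst hxi
        rw [sig_apply_eq]
        exact hx1
      · exact sig_apply_ne _ _ hxi
    · have hxs : x ∈ s := hfin.mem_toFinset.2 hx1
      set i0 := s.equivFin ⟨x, hxs⟩ with hi0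
      have hhx : h i0 = x := by
        rw [hh, hi0]
        exact congrArg Subtype.val (s.equivFin.symm_apply_apply ⟨x, hxs⟩)
      symm
      refine (ofFn_prod_onehot _ i0 ?_).trans ?_
      · intro i hi
        refine sig_apply_ne _ _ fun hc => hi (hinj ?_)
        rw [← hc]
        exact hhx.symm
      · rw [← hhx, sig_apply_eq]
  · -- Part 2
    intro k h a hinj ha
    classical
    set M := (Finset.univ.sup fun i => (e (h i)).natAbs) with hM
    choose ci pci using fun i : Fin k => he (h i)
    have U : ∀ i j : Fin k, ci i = ci j → e (h i) = e (h j) → i = j := by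
      intro i j hc hez
      apply hinj
      rw [pci i, pci j, hc, hez]
    have hpow : ∀ m : ℕ, t ^ (-(m : ℤ)) = t⁻¹ ^ m := by
      intro m
      rw [zpow_neg, zpow_natCast, inv_pow]
    obtain ⟨Dp, hDp⟩ : ∃ Dp : Fin n → ℕ → H, ∀ c m, Dp c m =
        if hx : ∃ i, ci i = c ∧ e (h i) = (m : ℤ) then a hx.choose else 1 :=
      ⟨_, fun _ _ => rfl⟩
    obtain ⟨Dm, hDm⟩ : ∃ Dm : Fin n → ℕ → H, ∀ c m, Dm c m =
        if hx : ∃ i, ci i = c ∧ e (h i) = -(m : ℤ) ∧ m ≠ 0 then a hx.choose else 1 :=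
      ⟨_, fun _ _ => rfl⟩
    have Dp_spec : ∀ (c : Fin n) (m : ℕ) (i : Fin k), ci i = c → e (h i) = (m : ℤ) → Dp c m = a i := by
      intro c m i h1 h2
      have hx : ∃ i, ci i = c ∧ e (h i) = (m : ℤ) := ⟨i, h1, h2⟩
      rw [hDp, dif_pos hx]
      exact congrArg a (U _ i (hx.choose_spec.1.trans h1.symm) (hx.choose_spec.2.trans h2.symm))
    have Dm_spec : ∀ (c : Fin n) (m : ℕ) (i : Fin k), ci i = c → e (h i) = -(m : ℤ) → m ≠ 0 → Dm c m = a i := by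
      intro c m i h1 h2 h3
      have hx : ∃ i, ci i = c ∧ e (h i) = -(m : ℤ) ∧ m ≠ 0 := ⟨i, h1, h2, h3⟩
      rw [hDm, dif_pos hx]
      exact congrArg a (U _ i (hx.choose_spec.1.trans h1.symm)
        (hx.choose_spec.2.1.trans h2.symm))
    have Dp_ne : ∀ (c : Fin n) (m : ℕ), Dp c m ≠ 1 → ∃ i, ci i = c ∧ e (h i) = (m : ℤ) := by
      intro c m hne
      by_cases hx : ∃ i, ci i = c ∧ e (h i) = (m : ℤ)
      · exact hx
      · exact absurd (by rw [hDp, dif_neg hx]) hne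
    have Dm_ne : ∀ (c : Fin n) (m : ℕ), Dm c m ≠ 1 → ∃ i, ci i = c ∧ e (h i) = -(m : ℤ) ∧ m ≠ 0 := by
      intro c m hne
      by_cases hx : ∃ i, ci i = c ∧ e (h i) = -(m : ℤ) ∧ m ≠ 0
      · exact hx
      · exact absurd (by rw [hDm, dif_neg hx]) hne
    have htgen : (inr t : Wreath H G) ∈ wreathGen H G S :=
      Or.inr ⟨t, by rw [hSdef]; exact Or.inl rfl, rfl⟩
    have hggen : ∀ c : Fin n, (inr (g c) : Wreath H G) ∈ wreathGen H G S :=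
      fun c => Or.inr ⟨g c, by rw [hSdef]; exact Or.inr ⟨c, rfl⟩, rfl⟩
    choose Ap hAp1 hAp2 hAp3 using fun c : Fin n => sweep S t (Or.inl htgen) M (Dp c)
    choose Am hAm1 hAm2 hAm3 using fun c : Fin n =>
      sweep S t⁻¹ (Or.inr (by rw [← map_inv, inv_inv]; exact htgen)) M (Dm c)
    set wc : Fin n → List (Wreath H G) := fun c =>
      inr (g c) :: (Ap c ++ (Am c ++ [(inr (g c) : Wreath H G)⁻¹])) with hwc
    refine le_trans (Nat.sInf_le ⟨(List.ofFn wc).flatten, rfl, ?_, ?_⟩) ?_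
    · -- letters
      intro y hy
      rw [List.mem_flatten] at hy
      obtain ⟨l, hl, hyl⟩ := hy
      rw [List.mem_ofFn] at hl
      obtain ⟨c, rfl⟩ := hl
      simp only [hwc, List.mem_cons, List.mem_append, List.mem_singleton] at hyl
      rcases hyl with rfl | hyl | hyl | rfl | hyl
      · exact Or.inl (hggen c)
      · exact hAp1 c y hyl
      · exact hAm1 c y hyl
      · exact Or.inr (by rw [inv_inv]; exact hggen c)
      · cases hyl
    · -- product
      rw [List.prod_flatten, List.map_ofFn]
      have hQ : (List.prod ∘ wc) = fun c =>
          (List.ofFn fun m : Fin (M + 1) => bulb H G (g c * t ^ (m : ℕ)) (Dp c m)).prod *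
            (List.ofFn fun m : Fin (M + 1) => bulb H G (g c * t⁻¹ ^ (m : ℕ)) (Dm c m)).prod := by
        funext c
        have h1 : (wc c).prod =
            inr (g c) * ((Ap c).prod * ((Am c).prod * (inr (g c) : Wreath H G)⁻¹)) := by
          simp [hwc, List.prod_cons, List.prod_append, mul_assoc]
        have h2 : ∀ (x P1 P2 : Wreath H G),
            x * (P1 * (P2 * x⁻¹)) = (x * (P1 * x⁻¹)) * (x * (P2 * x⁻¹)) := by
          intro x P1 P2; group
        simp only [Function.comp_apply]
        rw [h1, hAp3, hAm3, h2, conj_ofFn_bulb, conj_ofFn_bulb]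
      rw [hQ]
      -- final product identity
      symm
      simp only [bulb_eq_inl]
      rw [inl_ofFn_prod]
      rw [show (List.ofFn fun c : Fin n =>
          (List.ofFn fun m : Fin (M + 1) => (inl (sig (g c * t ^ (m : ℕ)) (Dp c m)) : Wreath H G)).prod *
            (List.ofFn fun m : Fin (M + 1) => (inl (sig (g c * t⁻¹ ^ (m : ℕ)) (Dm c m)) : Wreath H G)).prod) =
          List.ofFn fun c : Fin n => (inl
            ((List.ofFn fun m : Fin (M + 1) => sig (g c * t ^ (m : ℕ)) (Dp c m)).prod *
              (List.ofFn fun m : Fin (M + 1) => sig (g c * t⁻¹ ^ (m : ℕ)) (Dm c m)).prod) : Wreath H G)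
        from congrArg List.ofFn (funext fun c => by rw [inl_ofFn_prod, inl_ofFn_prod, map_mul])]
      rw [inl_ofFn_prod]
      refine congrArg inl ?_
      refine Subtype.ext (funext fun x => ?_)
      rw [wprod_apply, wprod_apply, List.map_ofFn, List.map_ofFn]
      simp only [Function.comp_def, MulMemClass.coe_mul, Pi.mul_apply, wprod_apply, List.map_ofFn]
      by_cases hex : ∃ i : Fin k, x = h i
      · obtain ⟨i0, hx0⟩ := hex
        have hm0le : (e (h i0)).natAbs ≤ M := by rw [hM]; exact Finset.le_sup (f := fun i => (e (h i)).natAbs) (Finset.mem_univ i0)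
        set m0 : Fin (M + 1) := ⟨(e (h i0)).natAbs, Nat.lt_succ_of_le hm0le⟩ with hm0
        set c0 := ci i0 with hc0
        trans (a i0)
        · -- LHS one-hot
          refine (ofFn_prod_onehot _ i0 fun i hi =>
            sig_apply_ne _ _ fun hc => hi (hinj (hc.symm.trans hx0))).trans ?_
          rw [hx0, sig_apply_eq]
        · -- RHS one-hot
          symm
          refine (ofFn_prod_onehot _ c0 ?_).trans ?_
          · -- other cosets are trivial
            intro c hc
            have e1 : (List.ofFn fun m : Fin (M + 1) =>
                (sig (g c * t ^ (m : ℕ)) (Dp c m) : G → H) x).prod = 1 := by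
              apply ofFn_prod_one
              intro m
              by_cases hxm : x = g c * t ^ (m : ℕ)
              · rw [hxm, sig_apply_eq]
                by_contra hne
                obtain ⟨i, hci, hei⟩ := Dp_ne c m hne
                have hxi : x = h i := by rw [hxm, pci i, hci, hei, zpow_natCast]
                have hii : i = i0 := hinj (hxi.symm.trans hx0)
                exact hc (by rw [← hci, hii])
              · exact sig_apply_ne _ _ hxm
            have e2 : (List.ofFn fun m : Fin (M + 1) =>
                (sig (g c * t⁻¹ ^ (m : ℕ)) (Dm c m) : G → H) x).prod = 1 := by
              apply ofFn_prod_one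
              intro m
              by_cases hxm : x = g c * t⁻¹ ^ (m : ℕ)
              · rw [hxm, sig_apply_eq]
                by_contra hne
                obtain ⟨i, hci, hei, -⟩ := Dm_ne c m hne
                have hxi : x = h i := by rw [hxm, pci i, hci, hei, hpow]
                have hii : i = i0 := hinj (hxi.symm.trans hx0)
                exact hc (by rw [← hci, hii])
              · exact sig_apply_ne _ _ hxm
            rw [e1, e2, one_mul]
          · -- the c0 entry
            by_cases hz : 0 ≤ e (h i0)
            · have hcast : ((m0 : ℕ) : ℤ) = e (h i0) := by
                simp only [hm0]
                omega
              have eQ : (List.ofFn fun m : Fin (M + 1) =>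
                  (sig (g c0 * t⁻¹ ^ (m : ℕ)) (Dm c0 m) : G → H) x).prod = 1 := by
                apply ofFn_prod_one
                intro m
                by_cases hxm : x = g c0 * t⁻¹ ^ (m : ℕ)
                · rw [hxm, sig_apply_eq]
                  by_contra hne
                  obtain ⟨i, hci, hei, hm0ne⟩ := Dm_ne c0 m hne
                  have hxi : x = h i := by rw [hxm, pci i, hci, hei, hpow]
                  have hii : i = i0 := hinj (hxi.symm.trans hx0)
                  rw [hii] at hei
                  omega
                · exact sig_apply_ne _ _ hxm
              have eP : (List.ofFn fun m : Fin (M + 1) =>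
                  (sig (g c0 * t ^ (m : ℕ)) (Dp c0 m) : G → H) x).prod = a i0 := by
                refine (ofFn_prod_onehot _ m0 ?_).trans ?_
                · intro m hm
                  by_cases hxm : x = g c0 * t ^ (m : ℕ)
                  · rw [hxm, sig_apply_eq]
                    by_contra hne
                    obtain ⟨i, hci, hei⟩ := Dp_ne c0 m hne
                    have hxi : x = h i := by rw [hxm, pci i, hci, hei, zpow_natCast]
                    have hii : i = i0 := hinj (hxi.symm.trans hx0)
                    rw [hii] at hei
                    exact hm (Fin.ext (by omega))
                  · exact sig_apply_ne _ _ hxm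
                · have hxpos : x = g c0 * t ^ ((m0 : ℕ)) := by
                    rw [hx0, pci i0, ← hc0, ← hcast, zpow_natCast]
                  rw [hxpos, sig_apply_eq]
                  exact Dp_spec c0 m0 i0 hc0.symm hcast.symm
              rw [eP, eQ, mul_one]
            · have hcast : e (h i0) = -((m0 : ℕ) : ℤ) := by
                simp only [hm0]
                omega
              have hm0ne : (m0 : ℕ) ≠ 0 := by
                simp only [hm0]
                omega
              have eP : (List.ofFn fun m : Fin (M + 1) =>
                  (sig (g c0 * t ^ (m : ℕ)) (Dp c0 m) : G → H) x).prod = 1 := by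
                apply ofFn_prod_one
                intro m
                by_cases hxm : x = g c0 * t ^ (m : ℕ)
                · rw [hxm, sig_apply_eq]
                  by_contra hne
                  obtain ⟨i, hci, hei⟩ := Dp_ne c0 m hne
                  have hxi : x = h i := by rw [hxm, pci i, hci, hei, zpow_natCast]
                  have hii : i = i0 := hinj (hxi.symm.trans hx0)
                  rw [hii] at hei
                  omega
                · exact sig_apply_ne _ _ hxm
              have eQ : (List.ofFn fun m : Fin (M + 1) =>
                  (sig (g c0 * t⁻¹ ^ (m : ℕ)) (Dm c0 m) : G → H) x).prod = a i0 := by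
                refine (ofFn_prod_onehot _ m0 ?_).trans ?_
                · intro m hm
                  by_cases hxm : x = g c0 * t⁻¹ ^ (m : ℕ)
                  · rw [hxm, sig_apply_eq]
                    by_contra hne
                    obtain ⟨i, hci, hei, -⟩ := Dm_ne c0 m hne
                    have hxi : x = h i := by rw [hxm, pci i, hci, hei, hpow]
                    have hii : i = i0 := hinj (hxi.symm.trans hx0)
                    rw [hii] at hei
                    exact hm (Fin.ext (by omega))
                  · exact sig_apply_ne _ _ hxm
                · have hxneg : x = g c0 * t⁻¹ ^ ((m0 : ℕ)) := by
                    rw [hx0, pci i0, ← hc0, hcast, hpow]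
                  rw [hxneg, sig_apply_eq]
                  exact Dm_spec c0 m0 i0 hc0.symm hcast hm0ne
              rw [eP, eQ, one_mul]
      · -- x not in the support at all
        trans (1 : H)
        · exact ofFn_prod_one fun i => sig_apply_ne _ _ fun hc => hex ⟨i, hc⟩
        · symm
          apply ofFn_prod_one
          intro c
          have e1 : (List.ofFn fun m : Fin (M + 1) =>
              (sig (g c * t ^ (m : ℕ)) (Dp c m) : G → H) x).prod = 1 := by
            apply ofFn_prod_one
            intro m
            by_cases hxm : x = g c * t ^ (m : ℕ)
            · rw [hxm, sig_apply_eq]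
              by_contra hne
              obtain ⟨i, hci, hei⟩ := Dp_ne c m hne
              exact hex ⟨i, by rw [hxm, pci i, hci, hei, zpow_natCast]⟩
            · exact sig_apply_ne _ _ hxm
          have e2 : (List.ofFn fun m : Fin (M + 1) =>
              (sig (g c * t⁻¹ ^ (m : ℕ)) (Dm c m) : G → H) x).prod = 1 := by
            apply ofFn_prod_one
            intro m
            by_cases hxm : x = g c * t⁻¹ ^ (m : ℕ)
            · rw [hxm, sig_apply_eq]
              by_contra hne
              obtain ⟨i, hci, hei, -⟩ := Dm_ne c m hne
              exact hex ⟨i, by rw [hxm, pci i, hci, hei, hpow]⟩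
            · exact sig_apply_ne _ _ hxm
          rw [e1, e2, one_mul]
    · -- length bound
      rw [List.length_flatten, List.map_ofFn, List.sum_ofFn]
      have hlen : ∀ c, ((List.length ∘ wc) c) ≤ 2 + 4 * M + (cnt M (Dp c) + cnt M (Dm c)) := by
        intro c
        have h1 := hAp2 c
        have h2 := hAm2 c
        simp only [Function.comp_apply, hwc, List.length_cons, List.length_append,
          List.length_singleton, List.length_nil]
        omega
      have hcnt : ∑ c : Fin n, (cnt M (Dp c) + cnt M (Dm c)) ≤ k := by
        by_cases hk0 : k = 0
        · have h0 : ∀ c, cnt M (Dp c) = 0 ∧ cnt M (Dm c) = 0 := by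
            intro c
            constructor
            · unfold cnt
              rw [Finset.card_filter]
              refine Finset.sum_eq_zero fun m _ => ?_
              rw [if_neg (not_not.2 ?_)]
              rw [hDp, dif_neg]
              rintro ⟨i, -⟩
              exact absurd i.isLt (by omega)
            · unfold cnt
              rw [Finset.card_filter]
              refine Finset.sum_eq_zero fun m _ => ?_
              rw [if_neg (not_not.2 ?_)]
              rw [hDm, dif_neg]
              rintro ⟨i, -⟩
              exact absurd i.isLt (by omega)
          calc ∑ c : Fin n, (cnt M (Dp c) + cnt M (Dm c)) = 0 := by
                refine Finset.sum_eq_zero fun c _ => ?_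
                simp [(h0 c).1, (h0 c).2]
            _ ≤ k := Nat.zero_le k
        · haveI : Inhabited (Fin k) := ⟨⟨0, Nat.pos_of_ne_zero hk0⟩⟩
          have hp : ∀ c, cnt M (Dp c) ≤
              (Finset.univ.filter fun i : Fin k => ci i = c ∧ 0 ≤ e (h i)).card := by
            intro c
            refine cnt_le_card (Dp c) _
              (fun m : Fin (M + 1) =>
                if hx : ∃ i, ci i = c ∧ e (h i) = ((m : ℕ) : ℤ) then hx.choose else default) ?_ ?_
            · intro m hne
              obtain ⟨i, hci, hei⟩ := Dp_ne c m hne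
              have hx : ∃ i, ci i = c ∧ e (h i) = ((m : ℕ) : ℤ) := ⟨i, hci, hei⟩
              rw [dif_pos hx, Finset.mem_filter]
              refine ⟨Finset.mem_univ _, hx.choose_spec.1, ?_⟩
              rw [hx.choose_spec.2]
              exact Int.natCast_nonneg _
            · intro m1 m2 hne1 hne2 heq
              obtain ⟨i1, hci1, hei1⟩ := Dp_ne c m1 hne1
              obtain ⟨i2, hci2, hei2⟩ := Dp_ne c m2 hne2
              have hx1 : ∃ i, ci i = c ∧ e (h i) = ((m1 : ℕ) : ℤ) := ⟨i1, hci1, hei1⟩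
              have hx2 : ∃ i, ci i = c ∧ e (h i) = ((m2 : ℕ) : ℤ) := ⟨i2, hci2, hei2⟩
              rw [dif_pos hx1, dif_pos hx2] at heq
              have e1 := hx1.choose_spec.2
              have e2 := hx2.choose_spec.2
              rw [heq] at e1
              exact Fin.ext (by omega)
          have hm : ∀ c, cnt M (Dm c) ≤
              (Finset.univ.filter fun i : Fin k => ci i = c ∧ e (h i) < 0).card := by
            intro c
            refine cnt_le_card (Dm c) _
              (fun m : Fin (M + 1) =>
                if hx : ∃ i, ci i = c ∧ e (h i) = -((m : ℕ) : ℤ) ∧ (m : ℕ) ≠ 0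
                  then hx.choose else default) ?_ ?_
            · intro m hne
              obtain ⟨i, hci, hei, hm0⟩ := Dm_ne c m hne
              have hx : ∃ i, ci i = c ∧ e (h i) = -((m : ℕ) : ℤ) ∧ (m : ℕ) ≠ 0 := ⟨i, hci, hei, hm0⟩
              rw [dif_pos hx, Finset.mem_filter]
              refine ⟨Finset.mem_univ _, hx.choose_spec.1, ?_⟩
              have := hx.choose_spec.2.1
              have := hx.choose_spec.2.2
              omega
            · intro m1 m2 hne1 hne2 heq
              obtain ⟨i1, hci1, hei1, hn1⟩ := Dm_ne c m1 hne1
              obtain ⟨i2, hci2, hei2, hn2⟩ := Dm_ne c m2 hne2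
              have hx1 : ∃ i, ci i = c ∧ e (h i) = -((m1 : ℕ) : ℤ) ∧ (m1 : ℕ) ≠ 0 := ⟨i1, hci1, hei1, hn1⟩
              have hx2 : ∃ i, ci i = c ∧ e (h i) = -((m2 : ℕ) : ℤ) ∧ (m2 : ℕ) ≠ 0 := ⟨i2, hci2, hei2, hn2⟩
              rw [dif_pos hx1, dif_pos hx2] at heq
              have e1 := hx1.choose_spec.2.1
              have e2 := hx2.choose_spec.2.1
              rw [heq] at e1
              exact Fin.ext (by omega)
          have hsplit : ∀ c : Fin n,
              (Finset.univ.filter fun i : Fin k => ci i = c ∧ 0 ≤ e (h i)).card +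
                (Finset.univ.filter fun i : Fin k => ci i = c ∧ e (h i) < 0).card =
                (Finset.univ.filter fun i : Fin k => ci i = c).card := by
            intro c
            rw [Finset.card_filter, Finset.card_filter, Finset.card_filter,
              ← Finset.sum_add_distrib]
            refine Finset.sum_congr rfl fun i _ => ?_
            by_cases h1 : ci i = c
            · by_cases h2 : 0 ≤ e (h i)
              · simp [h1, h2, not_lt.2 h2]
              · simp [h1, h2, not_le.1 h2]
            · simp [h1]
          have hfib : ∑ c : Fin n, (Finset.univ.filter fun i : Fin k => ci i = c).card = k := by
            rw [← Finset.card_eq_sum_card_fiberwise (f := ci) (t := Finset.univ)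
              fun x _ => Finset.mem_univ _]
            simp
          calc ∑ c : Fin n, (cnt M (Dp c) + cnt M (Dm c))
              ≤ ∑ c : Fin n, ((Finset.univ.filter fun i : Fin k => ci i = c ∧ 0 ≤ e (h i)).card +
                (Finset.univ.filter fun i : Fin k => ci i = c ∧ e (h i) < 0).card) :=
                Finset.sum_le_sum fun c _ => Nat.add_le_add (hp c) (hm c)
            _ = ∑ c : Fin n, (Finset.univ.filter fun i : Fin k => ci i = c).card :=
                Finset.sum_congr rfl fun c _ => hsplit c
            _ = k := hfib
      calc ∑ c : Fin n, (List.length ∘ wc) c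
          ≤ ∑ c : Fin n, (2 + 4 * M + (cnt M (Dp c) + cnt M (Dm c))) :=
            Finset.sum_le_sum fun c _ => hlen c
        _ = n * (2 + 4 * M) + ∑ c : Fin n, (cnt M (Dp c) + cnt M (Dm c)) := by
            rw [Finset.sum_add_distrib, Finset.sum_const, Finset.card_univ, Fintype.card_fin,
              smul_eq_mul]
        _ ≤ n * (2 + 4 * M) + k := Nat.add_le_add_left hcnt _
        _ ≤ n * (k + 2 + 4 * M) := by
            have hk : k ≤ n * k := Nat.le_mul_of_pos_left k hn
            have hexp : n * (k + 2 + 4 * M) = n * k + n * (2 + 4 * M) := by ring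
            omega


end
end

section
/- Let G be a finitely generated group and H ≠ 1 a finite group, and let K be the kernel of the projection H≀G → G, equipped with the metric induced from the word metric on H≀G (generating set (H∖{1}) ∪ S with S a finite generating set of G). If γ is the growth function of G, then the function D(r) := (2r+1)·γ(r) is a 0-dimensional control function of K. -/
open Function SemidirectProduct ENNReal

noncomputable section

variable (H G : Type*) [Group H] [Group G]

/-!
Take the whole kernel `K` as the single set of the cover. A word of `H ≀ G` only changes lamps
at points its `G`-cursor visits, so a word of length `< r` has lamp configuration supported in
the ball `B(1, r)` of `G`. Along an `r`-chain in `K` every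
step, and hence by telescoping the difference `x⁻¹ y` of the endpoints, is therefore a
configuration supported in `B(1, r)`. Such a configuration is a product of at most `γ(r)` bulbs
`g a g⁻¹` with `|g| < r`, each of length at most `2 |g| + 1 < 2 r + 1`.
-/

section WordLength

variable {M N : Type*} [Group M] [Group N] {S : Set M}

/-- Unlike `wordLength`, which is a junk `0` when `g` has no word at all, this bounds the length
of an actual word. -/
def HasWordLE (S : Set M) (g : M) (n : ℕ) : Prop :=
  ∃ w : List M, w.length ≤ n ∧ (∀ x ∈ w, x ∈ S ∨ x⁻¹ ∈ S) ∧ w.prod = g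

namespace HasWordLE

variable {g h : M} {m n : ℕ}

theorem wordLength_le (hg : HasWordLE S g n) : wordLength S g ≤ n := by
  obtain ⟨w, hlen, hmem, hprod⟩ := hg
  exact (Nat.sInf_le ⟨w, rfl, hmem, hprod⟩ : wordLength S g ≤ w.length).trans hlen

theorem hasWordLE_wordLength (hg : HasWordLE S g n) : HasWordLE S g (wordLength S g) := by
  obtain ⟨w, -, hmem, hprod⟩ := hg
  obtain ⟨v, hv, hvmem, hvprod⟩ :=
    Nat.sInf_mem (s := {m | ∃ w : List M, w.length = m ∧ (∀ x ∈ w, x ∈ S ∨ x⁻¹ ∈ S) ∧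
      w.prod = g}) ⟨w.length, w, rfl, hmem, hprod⟩
  exact ⟨v, hv.le, hvmem, hvprod⟩

theorem mono (hg : HasWordLE S g m) (hmn : m ≤ n) : HasWordLE S g n :=
  let ⟨w, hlen, hmem, hprod⟩ := hg
  ⟨w, hlen.trans hmn, hmem, hprod⟩

theorem one : HasWordLE S (1 : M) 0 :=
  ⟨[], le_rfl, by simp, rfl⟩

theorem of_letter (hg : g ∈ S ∨ g⁻¹ ∈ S) : HasWordLE S g 1 :=
  ⟨[g], le_rfl, by simpa using hg, by simp⟩

theorem mul (hg : HasWordLE S g m) (hh : HasWordLE S h n) : HasWordLE S (g * h) (m + n) := by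
  obtain ⟨v, hvlen, hvmem, rfl⟩ := hg
  obtain ⟨w, hwlen, hwmem, rfl⟩ := hh
  refine ⟨v ++ w, by simpa using add_le_add hvlen hwlen, ?_, List.prod_append⟩
  simpa only [List.mem_append, or_imp, forall_and] using And.intro hvmem hwmem

theorem inv (hg : HasWordLE S g n) : HasWordLE S g⁻¹ n := by
  obtain ⟨w, hlen, hmem, rfl⟩ := hg
  refine ⟨(w.map (·⁻¹)).reverse, by simpa using hlen, ?_, (List.prod_inv_reverse w).symm⟩
  simp only [List.mem_reverse, List.mem_map, forall_exists_index, and_imp,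
    forall_apply_eq_imp_iff₂, inv_inv]
  exact fun x hx => (hmem x hx).symm

theorem map {T : Set N} (f : M →* N) (hf : ∀ x ∈ S, f x ∈ T) (hg : HasWordLE S g n) :
    HasWordLE T (f g) n := by
  obtain ⟨w, hlen, hmem, rfl⟩ := hg
  refine ⟨w.map f, by simpa using hlen, ?_, List.prod_hom w f⟩
  simp only [List.mem_map, forall_exists_index, and_imp, forall_apply_eq_imp_iff₂, ← map_inv]
  exact fun x hx => (hmem x hx).imp (hf x) (hf x⁻¹)

end HasWordLE

theorem hasWordLE_wordLength_of_closure_eq_top (hS : Subgroup.closure S = ⊤) (g : M) :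
    HasWordLE S g (wordLength S g) := by
  obtain ⟨n, hn⟩ : ∃ n, HasWordLE S g n :=
    Subgroup.closure_induction (p := fun g _ => ∃ n, HasWordLE S g n)
      (fun x hx => ⟨1, .of_letter (.inl hx)⟩) ⟨0, .one⟩
      (fun _ _ _ _ ⟨m, hm⟩ ⟨n, hn⟩ => ⟨m + n, hm.mul hn⟩) (fun _ _ ⟨n, hn⟩ => ⟨n, hn.inv⟩)
      (hS ▸ Subgroup.mem_top g)
  exact hn.hasWordLE_wordLength

theorem wordLength_letter_mul_le (hS : Subgroup.closure S = ⊤) {t : M} (ht : t ∈ S ∨ t⁻¹ ∈ S)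
    (g : M) : wordLength S (t * g) ≤ wordLength S g + 1 :=
  ((HasWordLE.of_letter ht).mul (hasWordLE_wordLength_of_closure_eq_top hS g)).wordLength_le.trans_eq
    (add_comm _ _)

theorem finite_setOf_wordLength_lt (hSfin : S.Finite) (hS : Subgroup.closure S = ⊤) (r : ℝ) :
    {g : M | (wordLength S g : ℝ) < r}.Finite := by
  let T := S ∪ S⁻¹
  have : Finite T := (hSfin.union hSfin.inv).to_subtype
  refine ((List.finite_length_le T ⌈r⌉₊).image fun l => (l.map Subtype.val).prod).subset ?_
  intro g hg
  obtain ⟨w, hlen, hmem, rfl⟩ := hasWordLE_wordLength_of_closure_eq_top hS g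
  lift w to List T using hmem
  refine ⟨w, ?_, rfl⟩
  have hw : ((w.map Subtype.val).length : ℝ) < r := (Nat.cast_le.mpr hlen).trans_lt hg
  simpa using Nat.cast_le.mp (hw.le.trans (Nat.le_ceil r))

end WordLength

theorem Subgroup.inv_mul_mem_of_chain {M : Type*} [Group M] (T : Subgroup M) {m : ℕ}
    (c : Fin (m + 1) → M) (hc : ∀ i : Fin m, (c i.castSucc)⁻¹ * c i.succ ∈ T) :
    (c 0)⁻¹ * c (Fin.last m) ∈ T := by
  induction Fin.last m using Fin.induction with
  | zero => simp
  | succ i ih =>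
    have := T.mul_mem ih (hc i)
    rwa [mul_assoc, mul_inv_cancel_left] at this

namespace WreathBase

variable {H G : Type*} [Group H] [Group G]

theorem wreathAct_apply_coe (b : G) (f : WreathBase H G) (x : G) :
    (wreathAct H G b f : G → H) x = f.1 (b⁻¹ * x) := rfl

def mulSupportedIn (B : Set G) : Subgroup (WreathBase H G) where
  carrier := {f | mulSupport f.1 ⊆ B}
  one_mem' := by simp
  mul_mem' hf hg := (mulSupport_mul _ _).trans (Set.union_subset hf hg)
  inv_mem' hf := by simpa using hf

variable [DecidableEq G]

def single (γ : G) (a : H) : WreathBase H G :=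
  ⟨Pi.mulSingle γ a, (Set.finite_singleton γ).subset Pi.mulSupport_mulSingle_subset⟩

@[simp]
theorem coe_single (γ : G) (a : H) : (single γ a : G → H) = Pi.mulSingle γ a := rfl

theorem single_inv (γ : G) (a : H) : single γ a⁻¹ = (single γ a)⁻¹ :=
  Subtype.ext (Pi.mulSingle_inv (f := fun _ : G => H) γ a)

@[simp]
theorem single_one (γ : G) : single γ (1 : H) = 1 :=
  Subtype.ext (Pi.mulSingle_one γ)

theorem atOne_eq_single (a : H) : atOne H G a = single 1 a := by
  ext x
  simp [atOne, Pi.mulSingle_apply]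

theorem wreathAct_single (b γ : G) (a : H) : wreathAct H G b (single γ a) = single (b * γ) a := by
  ext x
  simp [wreathAct_apply_coe, Pi.mulSingle_apply, inv_mul_eq_iff_eq_mul]

end WreathBase

namespace Wreath

open WreathBase

variable {H G : Type*} [Group H] [Group G] {S : Set G}

theorem bulb_eq_inl_single [DecidableEq G] (γ : G) (a : H) :
    bulb H G γ a = inl (single γ a) := by
  rw [bulb, ← map_inv, ← inl_aut, atOne_eq_single, wreathAct_single, mul_one]

theorem hasWordLE_inr (hS : Subgroup.closure S = ⊤) (γ : G) :
    HasWordLE (wreathGen H G S) (inr γ) (wordLength S γ) :=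
  (hasWordLE_wordLength_of_closure_eq_top hS γ).map inr fun s hs => .inr ⟨s, hs, rfl⟩

theorem hasWordLE_inl_atOne (a : H) : HasWordLE (wreathGen H G S) (inl (atOne H G a)) 1 := by
  classical
  by_cases ha : a = 1
  · rw [ha, atOne_eq_single, single_one, map_one]
    exact HasWordLE.one.mono zero_le_one
  · exact .of_letter (.inl (.inl ⟨a, ha, rfl⟩))

theorem hasWordLE_bulb (hS : Subgroup.closure S = ⊤) (γ : G) (a : H) :
    HasWordLE (wreathGen H G S) (bulb H G γ a) (2 * wordLength S γ + 1) :=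
  (((hasWordLE_inr hS γ).mul (hasWordLE_inl_atOne a)).mul (hasWordLE_inr hS γ).inv).mono
    (by omega)

theorem hasWordLE_inl_of_mulSupport_subset (hS : Subgroup.closure S = ⊤) {F : Finset G}
    {f : WreathBase H G} (hf : mulSupport f.1 ⊆ F) :
    HasWordLE (wreathGen H G S) (inl f) (∑ γ ∈ F, (2 * wordLength S γ + 1)) := by
  classical
  induction F using Finset.induction_on generalizing f with
  | empty =>
    have : f = 1 := Subtype.ext (mulSupport_eq_empty_iff.mp (by simpa using hf))
    simpa [this] using HasWordLE.one
  | insert γ F hγ ih =>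
    have hf' : mulSupport ((single γ (f.1 γ))⁻¹ * f).1 ⊆ F := by
      intro x hx
      by_cases hxγ : x = γ
      · simp [hxγ] at hx
      · have : x ∈ mulSupport f.1 := by simpa [Pi.mulSingle_eq_of_ne hxγ] using hx
        exact (Finset.mem_insert.mp (hf this)).resolve_left hxγ
    rw [Finset.sum_insert hγ, ← mul_inv_cancel_left (single γ (f.1 γ)) f, map_mul,
      ← bulb_eq_inl_single]
    exact (hasWordLE_bulb hS γ _).mul (ih hf')

theorem hasWordLE_wordLength_wreathGen (hS : Subgroup.closure S = ⊤) (w : Wreath H G) :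
    HasWordLE (wreathGen H G S) w (wordLength (wreathGen H G S) w) := by
  have hfin : (mulSupport w.left.1).Finite := w.left.2
  have := (hasWordLE_inl_of_mulSupport_subset hS hfin.coe_toFinset.symm.subset).mul
    (hasWordLE_inr hS w.right)
  rw [inl_left_mul_inr_right] at this
  exact this.hasWordLE_wordLength

theorem eq_inl_atOne_or_eq_inr_of_letter {x : Wreath H G}
    (hx : x ∈ wreathGen H G S ∨ x⁻¹ ∈ wreathGen H G S) :
    (∃ a : H, x = inl (atOne H G a)) ∨ ∃ t : G, (t ∈ S ∨ t⁻¹ ∈ S) ∧ x = inr t := by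
  classical
  rcases hx with (⟨a, -, rfl⟩ | ⟨s, hs, rfl⟩) | (⟨a, -, ha⟩ | ⟨s, hs, hs'⟩)
  · exact .inl ⟨a, rfl⟩
  · exact .inr ⟨s, .inl hs, rfl⟩
  · refine .inl ⟨a⁻¹, ?_⟩
    rw [← inv_inv x, ha, ← map_inv, atOne_eq_single, atOne_eq_single, single_inv]
  · refine .inr ⟨s⁻¹, .inr (by rwa [inv_inv]), ?_⟩
    rw [← inv_inv x, hs', map_inv]

theorem mulSupport_left_letter_mul_subset (hS : Subgroup.closure S = ⊤) {x g : Wreath H G}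
    (hx : x ∈ wreathGen H G S ∨ x⁻¹ ∈ wreathGen H G S) {n : ℕ}
    (hg : mulSupport g.left.1 ⊆ {γ | wordLength S γ ≤ n}) :
    mulSupport (x * g).left.1 ⊆ {γ | wordLength S γ ≤ n + 1} := by
  classical
  intro γ hγ
  rcases eq_inl_atOne_or_eq_inr_of_letter hx with ⟨a, rfl⟩ | ⟨t, ht, rfl⟩
  · by_cases hγ1 : γ = 1
    · rw [hγ1]
      exact HasWordLE.one.wordLength_le.trans (Nat.zero_le _)
    · have : γ ∈ mulSupport g.left.1 := by
        simpa [atOne_eq_single, Pi.mulSingle_eq_of_ne hγ1] using hγ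
      exact Nat.le_succ_of_le (hg this)
  · have h : t⁻¹ * γ ∈ mulSupport g.left.1 := by
      simpa [wreathAct_apply_coe] using hγ
    calc wordLength S γ = wordLength S (t * (t⁻¹ * γ)) := by rw [mul_inv_cancel_left]
      _ ≤ wordLength S (t⁻¹ * γ) + 1 := wordLength_letter_mul_le hS ht _
      _ ≤ n + 1 := Nat.add_le_add_right (hg h) 1

theorem mulSupport_left_subset_of_hasWordLE (hS : Subgroup.closure S = ⊤) {g : Wreath H G}
    {n : ℕ} (hg : HasWordLE (wreathGen H G S) g n) :
    mulSupport g.left.1 ⊆ {γ | wordLength S γ ≤ n} := by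
  obtain ⟨w, hlen, hmem, rfl⟩ := hg
  refine subset_trans ?_ fun γ (hγ : wordLength S γ ≤ w.length) => hγ.trans hlen
  clear hlen
  induction w with
  | nil => exact fun γ hγ => by simp at hγ
  | cons x w ih =>
    rw [List.prod_cons]
    exact mulSupport_left_letter_mul_subset hS (hmem x (by simp))
      (ih fun y hy => hmem y (by simp [hy]))

theorem wordLength_le_of_mem_mulSupport_left (hS : Subgroup.closure S = ⊤) {g : Wreath H G}
    {γ : G} (hγ : γ ∈ mulSupport g.left.1) : wordLength S γ ≤ wordLength (wreathGen H G S) g :=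
  mulSupport_left_subset_of_hasWordLE hS (hasWordLE_wordLength_wreathGen hS g) hγ

theorem inv_mul_mem_map_inl_mulSupportedIn (hS : Subgroup.closure S = ⊤) {x y : Wreath H G}
    (hx : x ∈ (rightHom : Wreath H G →* G).ker) (hy : y ∈ (rightHom : Wreath H G →* G).ker)
    {r : ℝ} (hxy : wreathDist H G S x y < r) :
    x⁻¹ * y ∈ (mulSupportedIn {γ | (wordLength S γ : ℝ) < r}).map inl := by
  obtain ⟨f, hf⟩ : x⁻¹ * y ∈ (inl : WreathBase H G →* Wreath H G).range := by
    rw [range_inl_eq_ker_rightHom]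
    exact mul_mem (inv_mem hx) hy
  refine ⟨f, fun γ hγ => ?_, hf⟩
  have := wordLength_le_of_mem_mulSupport_left (S := S) hS (g := x⁻¹ * y) (by rwa [← hf])
  exact (Nat.cast_le.mpr this).trans_lt hxy

theorem wordLength_inl_le (hSfin : S.Finite) (hS : Subgroup.closure S = ⊤) {r : ℝ}
    {f : WreathBase H G} (hf : f ∈ mulSupportedIn {γ | (wordLength S γ : ℝ) < r}) :
    (wordLength (wreathGen H G S) (inl f) : ℝ) ≤ (2 * r + 1) * growth S r := by
  have hB := finite_setOf_wordLength_lt hSfin hS r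
  have hword := hasWordLE_inl_of_mulSupport_subset (H := H) hS (f := f) (F := hB.toFinset)
    (by rw [hB.coe_toFinset]; exact hf)
  calc (wordLength (wreathGen H G S) (inl f) : ℝ)
      ≤ ∑ γ ∈ hB.toFinset, (2 * (wordLength S γ : ℝ) + 1) := by
        exact_mod_cast hword.wordLength_le
    _ ≤ ∑ γ ∈ hB.toFinset, (2 * r + 1) :=
        Finset.sum_le_sum fun γ hγ => by
          have : (wordLength S γ : ℝ) < r := hB.mem_toFinset.mp hγ
          linarith
    _ = (2 * r + 1) * growth S r := by
        rw [Finset.sum_const, nsmul_eq_mul, growth, Nat.card_coe_set_eq,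
          Set.ncard_eq_toFinset_card _ hB, mul_comm]

end Wreath

theorem statement_8_general {H G : Type*} [Group H] [Group G]
    (S : Set G) (hSfin : S.Finite) (hSgen : Subgroup.closure S = ⊤) :
    IsControlFunction (kerDist H G S) 0
      (fun r => ENNReal.ofReal ((2 * r + 1) * growth S r)) := by
  intro r _
  refine ⟨fun _ => Set.univ, Set.iUnion_const _, fun _ => ⟨0, Set.subset_univ _⟩, ?_⟩
  rintro - x - y - ⟨m, c, -, rfl, rfl, hstep⟩
  obtain ⟨f, hf, hxy⟩ := Subgroup.inv_mul_mem_of_chain _ (fun i => (c i).1) fun i =>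
    Wreath.inv_mul_mem_map_inl_mulSupportedIn hSgen (c _).2 (c _).2 (hstep i)
  refine ENNReal.ofReal_le_ofReal ?_
  rw [kerDist, wreathDist, ← hxy]
  exact Wreath.wordLength_inl_le hSfin hSgen hf

/-- `G` finitely generated, `H ≠ 1` finite, `K` the kernel of `H ≀ G → G` with
the metric induced from the word metric of the generating set `(H∖{1}) ∪ S`.  If `γ` is the
growth function of `G`, then `D(r) = (2r+1)·γ(r)` is a `0`-dimensional control function of `K`. -/
theorem statement_8 {H G : Type*} [Group H] [Finite H] [Nontrivial H] [Group G]
    (S : Set G) (hSfin : S.Finite) (hSgen : Subgroup.closure S = ⊤) :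
    IsControlFunction (kerDist H G S) 0
      (fun r => ENNReal.ofReal ((2 * r + 1) * growth S r)) :=
  statement_8_general S hSfin hSgen

end
end

section
/- Let G be a finitely generated infinite group with growth function γ and let D be an n-dimensional control function of G. Let H ≠ 1 be a finite group. Then for every k ≥ n there is a k-dimensional control function of H≀G that is weakly dominated by the function t ↦ (D(t)+t)·γ(D(t)+t). -/
open Function SemidirectProduct ENNReal

noncomputable section

variable (H G : Type*) [Group H] [Group G]

namespace Statement10Aux

open Subgroup

section WL

variable {X : Type*} [Group X]

/-- Every element is represented by a word over `S ∪ S⁻¹`. -/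
def Hgen (S : Set X) : Prop :=
  ∀ g : X, ∃ l : List X, (∀ x ∈ l, x ∈ S ∨ x⁻¹ ∈ S) ∧ l.prod = g

theorem hgen_of_closure {S : Set X} (h : Subgroup.closure S = ⊤) : Hgen S := by
  intro g
  have hg : g ∈ (Subgroup.closure S).toSubmonoid := by rw [h]; trivial
  rw [Subgroup.closure_toSubmonoid] at hg
  obtain ⟨l, hl, hp⟩ := Submonoid.exists_list_of_mem_closure hg
  refine ⟨l, fun x hx => ?_, hp⟩
  rcases hl x hx with h1 | h1
  · exact Or.inl h1
  · exact Or.inr (Set.mem_inv.mp h1)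

theorem wordLength_le_of_word {S : Set X} {l : List X}
    (hl : ∀ x ∈ l, x ∈ S ∨ x⁻¹ ∈ S) : wordLength S l.prod ≤ l.length :=
  Nat.sInf_le ⟨l, rfl, hl, rfl⟩

theorem exists_min_word {S : Set X} (hS : Hgen S) (g : X) :
    ∃ l : List X, (∀ x ∈ l, x ∈ S ∨ x⁻¹ ∈ S) ∧ l.prod = g ∧ l.length = wordLength S g := by
  obtain ⟨l0, hl0, hp0⟩ := hS g
  have hne : {m | ∃ w : List X, w.length = m ∧ (∀ x ∈ w, x ∈ S ∨ x⁻¹ ∈ S) ∧ w.prod = g}.Nonempty :=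
    ⟨l0.length, l0, rfl, hl0, hp0⟩
  obtain ⟨w, hw, hl, hp⟩ := Nat.sInf_mem hne
  exact ⟨w, hl, hp, hw⟩

theorem wordLength_one {S : Set X} : wordLength S (1 : X) = 0 :=
  Nat.le_zero.mp (by simpa using wordLength_le_of_word (S := S) (l := []) (by simp))

theorem wordLength_mul_le {S : Set X} (hS : Hgen S) (g h : X) :
    wordLength S (g * h) ≤ wordLength S g + wordLength S h := by
  obtain ⟨l1, hl1, hp1, hlen1⟩ := exists_min_word hS g
  obtain ⟨l2, hl2, hp2, hlen2⟩ := exists_min_word hS h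
  have hw : ∀ x ∈ l1 ++ l2, x ∈ S ∨ x⁻¹ ∈ S := by
    intro x hx
    rcases List.mem_append.mp hx with h1 | h1
    exacts [hl1 x h1, hl2 x h1]
  have h1 := wordLength_le_of_word hw
  rw [List.prod_append, hp1, hp2] at h1
  simpa [hlen1, hlen2] using h1

theorem wordLength_inv_le {S : Set X} (hS : Hgen S) (g : X) :
    wordLength S g⁻¹ ≤ wordLength S g := by
  obtain ⟨l, hl, hp, hlen⟩ := exists_min_word hS g
  have hw : ∀ x ∈ (l.map fun x => x⁻¹).reverse, x ∈ S ∨ x⁻¹ ∈ S := by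
    intro x hx
    rw [List.mem_reverse, List.mem_map] at hx
    obtain ⟨y, hy, rfl⟩ := hx
    rcases hl y hy with h1 | h1
    · exact Or.inr (by simpa using h1)
    · exact Or.inl h1
  have h1 := wordLength_le_of_word hw
  rw [← List.prod_inv_reverse, hp] at h1
  simpa [hlen] using h1

theorem wordLength_le_one {S : Set X} {g : X} (h : g ∈ S ∨ g⁻¹ ∈ S) :
    wordLength S g ≤ 1 := by
  have h1 := wordLength_le_of_word (S := S) (l := [g]) (by simpa using h)
  simpa using h1

theorem wordLength_eq_zero {S : Set X} (hS : Hgen S) {g : X}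
    (h : wordLength S g = 0) : g = 1 := by
  obtain ⟨l, _, hp, hlen⟩ := exists_min_word hS g
  rw [h, List.length_eq_zero_iff] at hlen
  rw [hlen] at hp
  simpa using hp.symm

/-- Balls of the word metric are finite. -/
theorem ball_finite_nat {S : Set X} (hfin : S.Finite) (hS : Hgen S) (N : ℕ) :
    {g : X | wordLength S g ≤ N}.Finite := by
  induction N with
  | zero =>
    refine Set.Finite.subset (Set.finite_singleton (1 : X)) fun g hg => ?_
    have : wordLength S g = 0 := Nat.le_zero.mp hg
    simpa using wordLength_eq_zero hS this
  | succ N ih =>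
    have hfin2 : ({1} ∪ (S ∪ S⁻¹) : Set X).Finite :=
      (Set.finite_singleton 1).union (hfin.union hfin.inv)
    refine Set.Finite.subset ((ih.prod hfin2).image fun p => p.1 * p.2) ?_
    intro g hg
    obtain ⟨l, hl, hp, hlen⟩ := exists_min_word hS g
    rcases eq_or_ne l [] with rfl | hne
    · exact ⟨(1, 1), ⟨by simp [wordLength_one (S := S)], Or.inl rfl⟩,
        by simpa using hp⟩
    · refine ⟨(l.dropLast.prod, l.getLast hne), ⟨?_, ?_⟩, ?_⟩
      · have hw : ∀ x ∈ l.dropLast, x ∈ S ∨ x⁻¹ ∈ S := fun x hx =>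
          hl x ((List.dropLast_sublist l).subset hx)
        have h1 := wordLength_le_of_word hw
        have h2 : l.dropLast.length ≤ N := by
          have := List.length_dropLast (xs := l)
          have hlen' : l.length ≤ N + 1 := hlen.le.trans hg
          omega
        exact h1.trans h2
      · rcases hl _ (List.getLast_mem hne) with h1 | h1
        · exact Or.inr (Or.inl h1)
        · exact Or.inr (Or.inr (Set.mem_inv.mpr h1))
      · show l.dropLast.prod * l.getLast hne = g
        rw [← hp]
        conv_rhs => rw [← List.dropLast_append_getLast hne]
        rw [List.prod_append, List.prod_singleton]

theorem ball_finite {S : Set X} (hfin : S.Finite) (hS : Hgen S) (R : ℝ) :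
    {g : X | (wordLength S g : ℝ) < R}.Finite := by
  refine (ball_finite_nat hfin hS ⌈R⌉₊).subset fun g hg => ?_
  have h1 : (wordLength S g : ℝ) < (⌈R⌉₊ : ℝ) := lt_of_lt_of_le hg (Nat.le_ceil R)
  exact_mod_cast h1.le

theorem one_le_growth {S : Set X} (hfin : S.Finite) (hS : Hgen S) {R : ℝ} (hR : 0 < R) :
    1 ≤ growth S R := by
  have hfb := ball_finite hfin hS R
  have hne : {g : X | (wordLength S g : ℝ) < R}.Nonempty :=
    ⟨1, by simpa [wordLength_one] using hR⟩
  have := (Set.ncard_pos hfb).mpr hne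
  rw [growth, Nat.card_coe_set_eq]
  omega

theorem card_le_growth {S : Set X} (hfin : S.Finite) (hS : Hgen S) {R : ℝ} {t : Finset X}
    (ht : ∀ g ∈ t, (wordLength S g : ℝ) < R) : (t.card : ℝ) ≤ (growth S R : ℝ) := by
  have hfb := ball_finite hfin hS R
  have h1 : (t : Set X) ⊆ {g : X | (wordLength S g : ℝ) < R} := fun g hg => ht g hg
  have h2 : (t : Set X).ncard ≤ {g : X | (wordLength S g : ℝ) < R}.ncard :=
    Set.ncard_le_ncard h1 hfb
  rw [Set.ncard_coe_finset] at h2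
  rw [growth, Nat.card_coe_set_eq]
  exact_mod_cast h2

end WL

section Chains

variable {Y : Type*} {d : Y → Y → ℝ} {A : Set Y} {r : ℝ} {m : ℕ}

theorem chain_prefix {c : Fin (m + 1) → Y} (hmem : ∀ i, c i ∈ A)
    (hstep : ∀ i : Fin m, d (c i.castSucc) (c i.succ) < r) (j : Fin (m + 1)) :
    ChainIn d A r (c 0) (c j) := by
  have hle : j.1 + 1 ≤ m + 1 := j.2
  refine ⟨j.1, fun p => c (Fin.castLE hle p), fun p => hmem _, ?_, ?_, ?_⟩
  · show c (Fin.castLE hle 0) = c 0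
    congr 1
  · show c (Fin.castLE hle (Fin.last j.1)) = c j
    congr 1
  · intro p
    have hp : p.1 < m := by omega
    have := hstep ⟨p.1, hp⟩
    have e1 : Fin.castLE hle p.castSucc = (⟨p.1, hp⟩ : Fin m).castSucc := by ext; simp
    have e2 : Fin.castLE hle p.succ = (⟨p.1, hp⟩ : Fin m).succ := by ext; simp
    show d (c (Fin.castLE hle p.castSucc)) (c (Fin.castLE hle p.succ)) < r
    rw [e1, e2]
    exact this

theorem exists_step_diff {Z : Type*} {c : Fin (m + 1) → Y} (f : Y → Z)
    (h : f (c 0) ≠ f (c (Fin.last m))) :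
    ∃ i : Fin m, f (c i.castSucc) ≠ f (c i.succ) := by
  by_contra hcon
  push_neg at hcon
  have key : ∀ jv : ℕ, ∀ hj : jv < m + 1, f (c 0) = f (c ⟨jv, hj⟩) := by
    intro jv
    induction jv with
    | zero => intro hj; congr 1
    | succ p ihp =>
      intro hj
      have hp : p < m + 1 := by omega
      have hpm : p < m := by omega
      rw [ihp hp]
      have := hcon ⟨p, hpm⟩
      have e1 : (⟨p, hpm⟩ : Fin m).castSucc = (⟨p, hp⟩ : Fin (m + 1)) := by ext; simp
      have e2 : (⟨p, hpm⟩ : Fin m).succ = (⟨p + 1, hj⟩ : Fin (m + 1)) := by ext; simp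
      rw [e1, e2] at this
      exact this
  exact h (by simpa [Fin.last] using key m (by omega))

end Chains

section WreathAux

variable {H G : Type*} [Group H] [Group G]

theorem atOne_apply_one (a : H) : (atOne H G a).1 (1 : G) = a := by
  simp [atOne]

theorem atOne_apply_ne (a : H) {x : G} (h : x ≠ 1) : (atOne H G a).1 x = 1 := by
  simp [atOne, h]

theorem atOne_one : atOne H G (1 : H) = 1 := by
  refine Subtype.ext (funext fun x => ?_)
  simp [atOne]

theorem atOne_inv (a : H) : (atOne H G a)⁻¹ = atOne H G a⁻¹ := by
  refine Subtype.ext (funext fun x => ?_)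
  show ((atOne H G a).1 x)⁻¹ = (atOne H G a⁻¹).1 x
  by_cases hx : x = 1
  · subst hx; rw [atOne_apply_one, atOne_apply_one]
  · rw [atOne_apply_ne _ hx, atOne_apply_ne _ hx, inv_one]

theorem act_apply (g : G) (f : WreathBase H G) (x : G) :
    ((wreathAct H G g) f).1 x = f.1 (g⁻¹ * x) := rfl

/-- The base element supported at `g` with value `a`. -/
def singleW (g : G) (a : H) : WreathBase H G := (wreathAct H G g) (atOne H G a)

theorem singleW_apply_self (g : G) (a : H) : (singleW g a).1 g = a := by
  show (atOne H G a).1 (g⁻¹ * g) = a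
  rw [inv_mul_cancel]
  exact atOne_apply_one a

theorem singleW_apply_ne (g : G) (a : H) {x : G} (h : x ≠ g) : (singleW g a).1 x = 1 := by
  show (atOne H G a).1 (g⁻¹ * x) = 1
  refine atOne_apply_ne _ fun hc => h ?_
  rw [inv_mul_eq_one] at hc
  exact hc.symm

theorem bulb_eq_inl (g : G) (a : H) : bulb H G g a = inl (singleW g a) := by
  rw [bulb, singleW, inl_aut, map_inv]

theorem mem_gen_inr {S : Set G} {s : G} (hs : s ∈ S) :
    (inr s : Wreath H G) ∈ wreathGen H G S := by
  rw [wreathGen]; exact Set.mem_union_right _ ⟨s, hs, rfl⟩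

theorem mem_gen_inl {S : Set G} {a : H} (ha : a ≠ 1) :
    (inl (atOne H G a) : Wreath H G) ∈ wreathGen H G S := by
  rw [wreathGen]; exact Set.mem_union_left _ ⟨a, ha, rfl⟩

theorem letter_shape {S : Set G} {ℓ : Wreath H G}
    (h : ℓ ∈ wreathGen H G S ∨ ℓ⁻¹ ∈ wreathGen H G S) :
    (∃ a : H, ℓ = inl (atOne H G a)) ∨ (∃ s : G, (s ∈ S ∨ s⁻¹ ∈ S) ∧ ℓ = inr s) := by
  rw [wreathGen] at h
  simp only [Set.mem_union, Set.mem_setOf_eq] at h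
  rcases h with (⟨a, -, he⟩ | ⟨s, hs, he⟩) | (⟨a, -, he⟩ | ⟨s, hs, he⟩)
  · exact Or.inl ⟨a, he⟩
  · exact Or.inr ⟨s, Or.inl hs, he⟩
  · refine Or.inl ⟨a⁻¹, ?_⟩
    have h2 : ℓ = (inl (atOne H G a) : Wreath H G)⁻¹ := by rw [← he, inv_inv]
    rw [h2, ← map_inv, atOne_inv]
  · refine Or.inr ⟨s⁻¹, Or.inr (by simpa using hs), ?_⟩
    have h2 : ℓ = (inr s : Wreath H G)⁻¹ := by rw [← he, inv_inv]
    rw [h2, ← map_inv]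

theorem prod_filter_ne_one' [DecidableEq G] (l : List G) :
    (l.filter (fun x => x ≠ 1)).prod = l.prod := by
  induction l with
  | nil => rfl
  | cons a t ih =>
    have ih' : (List.filter (fun x => !decide (x = 1)) t).prod = t.prod := by
      simpa using ih
    by_cases h : a = 1 <;> simp [List.filter_cons, h, ih']

end WreathAux

section WreathAux2

variable {H G : Type*} [Group H] [Group G]

theorem wordLength_proj_le {S : Set G} (hW : Hgen (wreathGen H G S)) (u : Wreath H G) :
    wordLength S (rightHom u) ≤ wordLength (wreathGen H G S) u := by
  classical
  obtain ⟨l, hl, hp, hlen⟩ := exists_min_word hW u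
  set L := (l.map (rightHom : Wreath H G →* G)).filter (fun x => x ≠ 1) with hL
  have hw : ∀ x ∈ L, x ∈ S ∨ x⁻¹ ∈ S := by
    intro x hx
    rw [hL] at hx
    simp only [List.mem_filter, decide_eq_true_eq] at hx
    obtain ⟨hx1, hx2⟩ := hx
    obtain ⟨ℓ, hℓ, rfl⟩ := List.mem_map.mp hx1
    rcases letter_shape (hl ℓ hℓ) with ⟨a, rfl⟩ | ⟨s, hs, rfl⟩
    · exact absurd (rightHom_inl _) hx2
    · rw [rightHom_inr]; rw [rightHom_inr] at hx2; exact hs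
  have hprod : L.prod = rightHom u := by
    rw [hL, prod_filter_ne_one', ← hp, ← map_list_prod]
  have h1 := wordLength_le_of_word hw
  rw [hprod] at h1
  refine h1.trans ?_
  calc L.length ≤ (l.map (rightHom : Wreath H G →* G)).length :=
        List.length_filter_le _ _
    _ = l.length := List.length_map _
    _ = _ := hlen

theorem wordLength_inr_le {S : Set G} (hG : Hgen S) (g : G) :
    wordLength (wreathGen H G S) (inr g : Wreath H G) ≤ wordLength S g := by
  obtain ⟨l, hl, hp, hlen⟩ := exists_min_word hG g
  have hw : ∀ x ∈ l.map (inr : G →* Wreath H G),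
      x ∈ wreathGen H G S ∨ x⁻¹ ∈ wreathGen H G S := by
    intro x hx
    obtain ⟨s, hs, rfl⟩ := List.mem_map.mp hx
    rcases hl s hs with h1 | h1
    · exact Or.inl (mem_gen_inr h1)
    · refine Or.inr ?_
      rw [← map_inv]
      exact mem_gen_inr h1
  have h1 := wordLength_le_of_word hw
  rw [← map_list_prod, hp] at h1
  simpa [hlen] using h1

theorem wordLength_inl_atOne_le {S : Set G} (a : H) :
    wordLength (wreathGen H G S) (inl (atOne H G a) : Wreath H G) ≤ 1 := by
  by_cases ha : a = 1
  · subst ha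
    rw [atOne_one, map_one, wordLength_one]
    omega
  · exact wordLength_le_one (Or.inl (mem_gen_inl ha))

theorem wordLength_bulb_le {S : Set G} (hG : Hgen S) (hW : Hgen (wreathGen H G S))
    (g : G) (a : H) :
    wordLength (wreathGen H G S) (bulb H G g a) ≤ 2 * wordLength S g + 1 := by
  have h1 := wordLength_mul_le hW (inr g * inl (atOne H G a)) ((inr g : Wreath H G)⁻¹)
  have h2 := wordLength_mul_le hW (inr g : Wreath H G) (inl (atOne H G a))
  have h3 : wordLength (wreathGen H G S) ((inr g : Wreath H G)⁻¹) ≤ wordLength S g := by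
    rw [← map_inv]
    exact (wordLength_inr_le hG g⁻¹).trans (wordLength_inv_le hG g)
  have h4 := wordLength_inr_le (H := H) hG g
  have h5 := wordLength_inl_atOne_le (S := S) a
  rw [bulb]
  omega

theorem support_step [DecidableEq G] {γ : G} {t : Finset G} (f : WreathBase H G)
    (hf : Function.mulSupport f.1 ⊆ ↑(insert γ t)) :
    Function.mulSupport ((singleW γ (f.1 γ))⁻¹ * f).1 ⊆ ↑t := by
  intro x hx
  rw [Function.mem_mulSupport] at hx
  by_contra hxt
  apply hx
  have hco : (((singleW γ (f.1 γ))⁻¹ * f).1 : G → H) x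
      = ((singleW γ (f.1 γ)).1 x)⁻¹ * f.1 x := rfl
  rw [hco]
  by_cases hxγ : x = γ
  · subst hxγ
    rw [singleW_apply_self, inv_mul_cancel]
  · have h1 : (singleW γ (f.1 γ)).1 x = 1 := singleW_apply_ne _ _ hxγ
    have h2 : f.1 x = 1 := by
      by_contra h2
      have := hf h2
      simp only [Finset.coe_insert, Set.mem_insert_iff, Finset.mem_coe] at this
      rcases this with h3 | h3
      · exact hxγ h3
      · exact hxt (by simpa using h3)
    rw [h1, h2, inv_one, one_mul]

theorem closure_wreathGen {S : Set G} (hSgen : Subgroup.closure S = ⊤) :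
    Subgroup.closure (wreathGen H G S) = ⊤ := by
  classical
  rw [eq_top_iff]
  rintro u -
  set T := Subgroup.closure (wreathGen H G S) with hT
  have hinr : ∀ g : G, (inr g : Wreath H G) ∈ T := by
    intro g
    have hle : Subgroup.closure S ≤ T.comap (inr : G →* Wreath H G) := by
      rw [Subgroup.closure_le]
      intro s hs
      exact Subgroup.subset_closure (mem_gen_inr hs)
    exact hle (by rw [hSgen]; trivial)
  have hatOne : ∀ a : H, (inl (atOne H G a) : Wreath H G) ∈ T := by
    intro a
    by_cases ha : a = 1
    · subst ha; rw [atOne_one, map_one]; exact one_mem T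
    · exact Subgroup.subset_closure (mem_gen_inl ha)
  have hsingle : ∀ (g : G) (a : H), (inl (singleW g a) : Wreath H G) ∈ T := by
    intro g a
    rw [← bulb_eq_inl, bulb]
    exact mul_mem (mul_mem (hinr g) (hatOne a)) (inv_mem (hinr g))
  have hbase : ∀ (t : Finset G) (f : WreathBase H G), Function.mulSupport f.1 ⊆ ↑t →
      (inl f : Wreath H G) ∈ T := by
    intro t
    induction t using Finset.induction_on with
    | empty =>
      intro f hf
      have hf1 : f = 1 := by
        refine Subtype.ext (funext fun x => ?_)
        by_contra hx
        simpa using hf hx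
      rw [hf1, map_one]
      exact one_mem T
    | @insert γ t hγ ih =>
      intro f hf
      have key : f = singleW γ (f.1 γ) * ((singleW γ (f.1 γ))⁻¹ * f) :=
        (mul_inv_cancel_left _ _).symm
      rw [key, map_mul]
      exact mul_mem (hsingle γ (f.1 γ)) (ih _ (support_step f hf))
  have hu : u = inl u.left * inr u.right := (inl_left_mul_inr_right u).symm
  rw [hu]
  refine mul_mem (hbase u.left.2.toFinset u.left ?_) (hinr u.right)
  exact (Set.Finite.coe_toFinset _).symm.subset

theorem wordLength_inl_le {S : Set G} (hG : Hgen S) (hW : Hgen (wreathGen H G S)) :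
    ∀ (t : Finset G) (f : WreathBase H G), Function.mulSupport f.1 ⊆ ↑t →
      (wordLength (wreathGen H G S) (inl f : Wreath H G) : ℝ) ≤
        ∑ γ ∈ t, (2 * (wordLength S γ : ℝ) + 1) := by
  classical
  intro t
  induction t using Finset.induction_on with
  | empty =>
    intro f hf
    have hf1 : f = 1 := by
      refine Subtype.ext (funext fun x => ?_)
      by_contra hx
      simpa using hf hx
    rw [hf1, map_one]
    simp [wordLength_one]
  | @insert γ t hγ ih =>
    intro f hf
    have key : f = singleW γ (f.1 γ) * ((singleW γ (f.1 γ))⁻¹ * f) :=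
      (mul_inv_cancel_left _ _).symm
    have h1 : wordLength (wreathGen H G S) (inl f : Wreath H G) ≤
        wordLength (wreathGen H G S) (inl (singleW γ (f.1 γ)) : Wreath H G) +
        wordLength (wreathGen H G S) (inl ((singleW γ (f.1 γ))⁻¹ * f) : Wreath H G) := by
      conv_lhs => rw [key, map_mul]
      exact wordLength_mul_le hW _ _
    have h2 : wordLength (wreathGen H G S) (inl (singleW γ (f.1 γ)) : Wreath H G) ≤
        2 * wordLength S γ + 1 := by
      rw [← bulb_eq_inl]
      exact wordLength_bulb_le hG hW γ _
    have h3 := ih ((singleW γ (f.1 γ))⁻¹ * f) (support_step f hf)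
    rw [Finset.sum_insert hγ]
    have hc : ((wordLength (wreathGen H G S) (inl f : Wreath H G) : ℝ)) ≤
        ((wordLength (wreathGen H G S) (inl (singleW γ (f.1 γ)) : Wreath H G) : ℝ)) +
        ((wordLength (wreathGen H G S) (inl ((singleW γ (f.1 γ))⁻¹ * f) : Wreath H G) : ℝ)) := by
      exact_mod_cast h1
    have hc2 : ((wordLength (wreathGen H G S) (inl (singleW γ (f.1 γ)) : Wreath H G) : ℝ)) ≤
        2 * (wordLength S γ : ℝ) + 1 := by exact_mod_cast h2
    linarith

theorem lamp_diff {S : Set G} (hG : Hgen S) :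
    ∀ (l : List (Wreath H G)),
      (∀ x ∈ l, x ∈ wreathGen H G S ∨ x⁻¹ ∈ wreathGen H G S) →
      ∀ (u : Wreath H G) (γ : G), (u.left).1 γ ≠ ((u * l.prod).left).1 γ →
        ((wordLength S (u.right⁻¹ * γ) : ℝ) < l.length) := by
  intro l
  induction l with
  | nil =>
    intro _ u γ hdiff
    simp at hdiff
  | cons ℓ t ih =>
    intro hl u γ hdiff
    have hprod : u * (ℓ :: t).prod = (u * ℓ) * t.prod := by
      rw [List.prod_cons, mul_assoc]
    have hlt : ∀ x ∈ t, x ∈ wreathGen H G S ∨ x⁻¹ ∈ wreathGen H G S :=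
      fun x hx => hl x (List.mem_cons_of_mem _ hx)
    have hlen : ((ℓ :: t).length : ℝ) = (t.length : ℝ) + 1 := by
      simp
    rcases letter_shape (hl ℓ List.mem_cons_self) with ⟨a, rfl⟩ | ⟨s, hs, rfl⟩
    · by_cases hγ : γ = u.right
      · subst hγ
        rw [inv_mul_cancel, wordLength_one, hlen]
        push_cast
        positivity
      · have hval : ((wreathAct H G u.right) ((inl (atOne H G a) : Wreath H G).left)).1 γ
            = 1 := by
          rw [left_inl]
          rw [act_apply]
          refine atOne_apply_ne _ fun hc => hγ ?_
          rw [inv_mul_eq_one] at hc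
          exact hc.symm
        have heq : ((u * inl (atOne H G a)).left).1 γ = (u.left).1 γ := by
          rw [mul_left]
          show (u.left).1 γ * _ = _
          rw [hval, mul_one]
        have hdiff' : ((u * inl (atOne H G a)).left).1 γ
            ≠ (((u * inl (atOne H G a)) * t.prod).left).1 γ := by
          rw [heq, ← hprod]
          exact hdiff
        have hIH := ih hlt (u * inl (atOne H G a)) γ hdiff'
        have hr : (u * inl (atOne H G a)).right = u.right := by
          rw [mul_right, right_inl, mul_one]
        rw [hr] at hIH
        rw [hlen]
        linarith
    · have hleft : (u * inr s).left = u.left := by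
        rw [mul_left, left_inr, map_one, mul_one]
      have hdiff' : ((u * inr s).left).1 γ ≠ (((u * inr s) * t.prod).left).1 γ := by
        rw [hleft, ← hprod]
        exact hdiff
      have hIH := ih hlt (u * inr s) γ hdiff'
      have hr : (u * inr s).right = u.right * s := by
        rw [mul_right, right_inr]
      rw [hr] at hIH
      have hsub : wordLength S (u.right⁻¹ * γ)
          ≤ 1 + wordLength S ((u.right * s)⁻¹ * γ) := by
        have he : u.right⁻¹ * γ = s * ((u.right * s)⁻¹ * γ) := by
          group
        rw [he]
        have hm := wordLength_mul_le hG s ((u.right * s)⁻¹ * γ)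
        have h1 := wordLength_le_one hs
        omega
      have hsub' : ((wordLength S (u.right⁻¹ * γ) : ℝ))
          ≤ 1 + ((wordLength S ((u.right * s)⁻¹ * γ) : ℝ)) := by exact_mod_cast hsub
      rw [hlen]
      linarith

end WreathAux2

section ControlLower

variable {G : Type*} [Group G]

theorem controlD_ge_one [Nontrivial G] {S : Set G} (hG : Hgen S)
    (hSgen : Subgroup.closure S = ⊤) {n : ℕ} {D : ℝ → ℝ}
    (hD : IsControlFunction (wordDist S : G → G → ℝ) n fun r => ENNReal.ofReal (D r))
    {r : ℝ} (hr : 1 < r) : 1 ≤ D r := by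
  obtain ⟨s, hsS, hs1⟩ : ∃ s ∈ S, s ≠ 1 := by
    by_contra hcon
    push_neg at hcon
    have hsub : S ⊆ {1} := fun s hs => hcon s hs
    have h1 : Subgroup.closure S ≤ Subgroup.closure {1} := Subgroup.closure_mono hsub
    rw [hSgen, Subgroup.closure_singleton_one] at h1
    obtain ⟨x, hx⟩ := exists_ne (1 : G)
    exact hx (Subgroup.mem_bot.mp (h1 (Subgroup.mem_top x)))
  have hws : wordLength S s = 1 := by
    have hle := wordLength_le_one (Or.inl hsS)
    have hne : wordLength S s ≠ 0 := fun h0 => hs1 (wordLength_eq_zero hG h0)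
    omega
  obtain ⟨P, hcov, hleb, hdiam⟩ := hD r (by linarith)
  obtain ⟨i, hi⟩ := hleb 1
  have h1P : (1 : G) ∈ P i := by
    refine hi ?_
    show ((wordLength S ((1 : G)⁻¹ * 1) : ℝ)) < r
    rw [inv_one, one_mul, wordLength_one]
    push_cast
    linarith
  have hsP : s ∈ P i := by
    refine hi ?_
    show ((wordLength S ((1 : G)⁻¹ * s) : ℝ)) < r
    rw [inv_one, one_mul, hws]
    push_cast
    linarith
  have hds : wordDist S 1 s = 1 := by
    show ((wordLength S ((1 : G)⁻¹ * s) : ℝ)) = 1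
    rw [inv_one, one_mul, hws]
    norm_num
  have hchain : ChainIn (wordDist S) (P i) r 1 s := by
    refine ⟨1, ![1, s], ?_, rfl, rfl, ?_⟩
    · intro p
      fin_cases p
      · exact h1P
      · exact hsP
    · intro p
      fin_cases p
      show wordDist S (![1, s] 0) (![1, s] 1) < r
      simp only [Matrix.cons_val_zero, Matrix.cons_val_one, Matrix.head_cons]
      rw [hds]
      linarith
  have hle := hdiam i 1 h1P s hsP hchain
  rw [hds] at hle
  rw [ENNReal.ofReal_one] at hle
  exact ENNReal.one_le_ofReal.mp hle

end ControlLower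

end Statement10Aux
/-- `G` finitely generated infinite with growth function `γ`, `D` an
`n`-dimensional control function of `G`, `H ≠ 1` finite.  For every `k ≥ n` there is a
`k`-dimensional control function of `H ≀ G` weakly dominated by `t ↦ (D(t)+t)·γ(D(t)+t)`. -/
theorem statement_10 {H G : Type*} [Group H] [Finite H] [Nontrivial H] [Group G] [Infinite G]
    (S : Set G) (hSfin : S.Finite) (hSgen : Subgroup.closure S = ⊤)
    (n : ℕ) (D : ℝ → ℝ)
    (hD : IsControlFunction (wordDist S : G → G → ℝ) n fun r => ENNReal.ofReal (D r))
    (k : ℕ) (hk : n ≤ k) :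
    ∃ D' : ℝ → ℝ,
      IsControlFunction (wreathDist H G S) k (fun r => ENNReal.ofReal (D' r)) ∧
      WeaklyDominates (fun t => (D t + t) * growth S (D t + t)) D' := by
  classical
  have hGgen : Statement10Aux.Hgen S := Statement10Aux.hgen_of_closure hSgen
  have hWtop : Subgroup.closure (wreathGen H G S) = ⊤ :=
    Statement10Aux.closure_wreathGen hSgen
  have hWgen : Statement10Aux.Hgen (wreathGen H G S) :=
    Statement10Aux.hgen_of_closure hWtop
  have hlip : ∀ a b : Wreath H G,
      wordDist S (rightHom a) (rightHom b) ≤ wreathDist H G S a b := by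
    intro a b
    show ((wordLength S ((rightHom a)⁻¹ * rightHom b) : ℝ)) ≤
      ((wordLength (wreathGen H G S) (a⁻¹ * b) : ℝ))
    rw [← map_inv, ← map_mul]
    exact_mod_cast Statement10Aux.wordLength_proj_le hWgen (a⁻¹ * b)
  refine ⟨fun t => 4 * ((D (4 * t + 2) + (4 * t + 2)) *
      (growth S (D (4 * t + 2) + (4 * t + 2)) : ℝ)) + 2, ?_, ?_⟩
  swap
  · exact ⟨4, 2, by norm_num, by norm_num, fun t ht => le_rfl⟩
  intro r hr
  set r' : ℝ := 4 * r + 2 with hr'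
  have hr1 : 1 < r' := by rw [hr']; linarith
  have hrr' : r < r' := by rw [hr']; linarith
  obtain ⟨P, hPcov, hPleb, hPdiam⟩ := hD r' (by linarith)
  have hD1 : 1 ≤ D r' := Statement10Aux.controlD_ge_one hGgen hSgen hD hr1
  set R : ℝ := D r' + r' with hR
  have hR3 : 3 ≤ R := by rw [hR]; linarith
  set ι : Fin (k + 1) → Fin (n + 1) := fun j => ⟨min j.1 n, by omega⟩ with hι
  have hιval : ∀ i : Fin (n + 1), ∃ j : Fin (k + 1), ι j = i := by
    intro i
    have h2 := i.2
    refine ⟨⟨i.1, by omega⟩, ?_⟩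
    rw [hι]
    ext
    simp
    omega
  refine ⟨fun j => rightHom ⁻¹' (P (ι j)), ?_, ?_, ?_⟩
  · rw [Set.eq_univ_iff_forall]
    intro x
    have hx : rightHom x ∈ ⋃ i, P i := by rw [hPcov]; trivial
    obtain ⟨i, hi⟩ := Set.mem_iUnion.mp hx
    obtain ⟨j, hj⟩ := hιval i
    refine Set.mem_iUnion.mpr ⟨j, ?_⟩
    show rightHom x ∈ P (ι j)
    rw [hj]
    exact hi
  · intro x
    obtain ⟨i, hi⟩ := hPleb (rightHom x)
    obtain ⟨j, hj⟩ := hιval i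
    refine ⟨j, fun y hy => ?_⟩
    show rightHom y ∈ P (ι j)
    rw [hj]
    refine hi ?_
    show wordDist S (rightHom x) (rightHom y) < r'
    calc wordDist S (rightHom x) (rightHom y) ≤ wreathDist H G S x y := hlip x y
      _ < r := hy
      _ < r' := hrr'
  · intro j x hx y hy hchain
    obtain ⟨m, c, hcmem, hc0, hclast, hcstep⟩ := hchain
    have hGchain : ∀ p : Fin (m + 1),
        ChainIn (wordDist S) (P (ι j)) r' (rightHom x) (rightHom (c p)) := by
      intro p
      have h0 : rightHom (c 0) = rightHom x := by rw [hc0]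
      rw [← h0]
      exact Statement10Aux.chain_prefix (c := fun q => rightHom (c q))
        (fun q => hcmem q)
        (fun q => lt_of_le_of_lt (hlip _ _) (lt_trans (hcstep q) hrr')) p
    have hdistG : ∀ p : Fin (m + 1),
        ((wordLength S ((x.right)⁻¹ * (c p).right) : ℝ)) ≤ D r' := by
      intro p
      have h1 := hPdiam (ι j) (rightHom x) hx (rightHom (c p)) (hcmem p) (hGchain p)
      exact (ENNReal.ofReal_le_ofReal_iff (by linarith)).mp h1
    set w : Wreath H G := x⁻¹ * y with hw
    have hwrlen : ((wordLength S w.right : ℝ)) ≤ D r' := by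
      have h1 := hdistG (Fin.last m)
      rw [hclast] at h1
      exact h1
    have hsupp : ∀ γ : G, w.left.1 γ ≠ 1 → (wordLength S γ : ℝ) < R := by
      intro γ hγ
      set ξ := x.right * γ with hξ
      have hxy : y = x * w := by rw [hw, mul_inv_cancel_left]
      have harg : x.right⁻¹ * ξ = γ := by rw [hξ, inv_mul_cancel_left]
      have hdiff : x.left.1 ξ ≠ y.left.1 ξ := by
        have hyl : y.left.1 ξ = x.left.1 ξ * w.left.1 γ := by
          rw [hxy, mul_left]
          show x.left.1 ξ * ((wreathAct H G x.right) w.left).1 ξ = _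
          rw [Statement10Aux.act_apply, harg]
        rw [hyl]
        intro heq
        exact hγ (left_eq_mul.mp heq)
      have hd0 : ((c 0).left).1 ξ ≠ ((c (Fin.last m)).left).1 ξ := by
        rw [hc0, hclast]; exact hdiff
      obtain ⟨p, hp⟩ :=
        Statement10Aux.exists_step_diff (fun z : Wreath H G => z.left.1 ξ) hd0
      obtain ⟨l, hl, hlp, hlen⟩ :=
        Statement10Aux.exists_min_word hWgen ((c p.castSucc)⁻¹ * (c p.succ))
      have hcs : c p.castSucc * l.prod = c p.succ := by
        rw [hlp, mul_inv_cancel_left]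
      have hdiff2 : ((c p.castSucc).left).1 ξ ≠ ((c p.castSucc * l.prod).left).1 ξ := by
        rw [hcs]; exact hp
      have hA := Statement10Aux.lamp_diff hGgen l hl (c p.castSucc) ξ hdiff2
      have hstep : (l.length : ℝ) < r := by
        have : (l.length : ℝ) =
            ((wordLength (wreathGen H G S) ((c p.castSucc)⁻¹ * (c p.succ)) : ℝ)) := by
          exact_mod_cast congrArg Nat.cast hlen
        rw [this]
        exact hcstep p
      have hbase := hdistG p.castSucc
      have htri : wordLength S γ ≤
          wordLength S ((x.right)⁻¹ * (c p.castSucc).right) +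
          wordLength S ((c p.castSucc).right⁻¹ * ξ) := by
        have he : γ = ((x.right)⁻¹ * (c p.castSucc).right) *
            ((c p.castSucc).right⁻¹ * ξ) := by
          rw [hξ]; group
        conv_lhs => rw [he]
        exact Statement10Aux.wordLength_mul_le hGgen _ _
      have htri' : (wordLength S γ : ℝ) ≤
          ((wordLength S ((x.right)⁻¹ * (c p.castSucc).right) : ℝ)) +
          ((wordLength S ((c p.castSucc).right⁻¹ * ξ) : ℝ)) := by
        exact_mod_cast htri
      rw [hR]
      calc (wordLength S γ : ℝ) ≤ _ + _ := htri'
        _ < D r' + r := by linarith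
        _ ≤ D r' + r' := by linarith
    set t : Finset G := w.left.2.toFinset with ht
    have htmem : ∀ γ ∈ t, (wordLength S γ : ℝ) < R := by
      intro γ hγt
      refine hsupp γ ?_
      rw [ht] at hγt
      exact (Set.Finite.mem_toFinset _).mp hγt
    have hinl : (wordLength (wreathGen H G S) (inl w.left : Wreath H G) : ℝ) ≤
        ∑ γ ∈ t, (2 * (wordLength S γ : ℝ) + 1) :=
      Statement10Aux.wordLength_inl_le hGgen hWgen t w.left
        (by rw [ht]; exact (Set.Finite.coe_toFinset _).symm.subset)
    have hsum : ∑ γ ∈ t, (2 * (wordLength S γ : ℝ) + 1) ≤ t.card * (2 * R + 1) := by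
      have h1 := Finset.sum_le_card_nsmul t (fun γ => 2 * (wordLength S γ : ℝ) + 1)
        (2 * R + 1) (fun γ hγ => by
          have := htmem γ hγ
          show 2 * (wordLength S γ : ℝ) + 1 ≤ 2 * R + 1
          linarith)
      rw [nsmul_eq_mul] at h1
      exact h1
    have hcard : (t.card : ℝ) ≤ (growth S R : ℝ) :=
      Statement10Aux.card_le_growth hSfin hGgen htmem
    have hg1 : (1 : ℝ) ≤ (growth S R : ℝ) := by
      exact_mod_cast Statement10Aux.one_le_growth hSfin hGgen
        (show (0 : ℝ) < R by linarith)
    have hw2 : wordLength (wreathGen H G S) w ≤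
        wordLength (wreathGen H G S) (inl w.left : Wreath H G) +
        wordLength (wreathGen H G S) (inr w.right : Wreath H G) := by
      conv_lhs => rw [← inl_left_mul_inr_right w]
      exact Statement10Aux.wordLength_mul_le hWgen _ _
    have hw3 : (wordLength (wreathGen H G S) (inr w.right : Wreath H G) : ℝ) ≤ D r' := by
      have h1 := Statement10Aux.wordLength_inr_le (H := H) hGgen w.right
      have h2 : ((wordLength (wreathGen H G S) (inr w.right : Wreath H G) : ℝ)) ≤
          ((wordLength S w.right : ℝ)) := by exact_mod_cast h1
      linarith
    have hw2' : (wordLength (wreathGen H G S) w : ℝ) ≤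
        ((wordLength (wreathGen H G S) (inl w.left : Wreath H G) : ℝ)) +
        ((wordLength (wreathGen H G S) (inr w.right : Wreath H G) : ℝ)) := by
      exact_mod_cast hw2
    have hDR : D r' ≤ R := by rw [hR]; linarith
    have hcm : (t.card : ℝ) * (2 * R + 1) ≤ (growth S R : ℝ) * (2 * R + 1) :=
      mul_le_mul_of_nonneg_right hcard (by linarith)
    have htotal : (wordLength (wreathGen H G S) w : ℝ) ≤
        (growth S R : ℝ) * (2 * R + 1) + D r' := by linarith
    have hgoal : wreathDist H G S x y = ((wordLength (wreathGen H G S) w : ℝ)) := rfl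
    have hDval : ((fun t => 4 * ((D (4 * t + 2) + (4 * t + 2)) *
        (growth S (D (4 * t + 2) + (4 * t + 2)) : ℝ)) + 2) r)
        = 4 * (R * (growth S R : ℝ)) + 2 := by
      show 4 * ((D (4 * r + 2) + (4 * r + 2)) *
        (growth S (D (4 * r + 2) + (4 * r + 2)) : ℝ)) + 2 = _
      rw [← hr', ← hR]
    refine le_trans (ENNReal.ofReal_le_ofReal ?_) le_rfl
    rw [hgoal, hDval]
    nlinarith [mul_nonneg (sub_nonneg.mpr hg1) (show (0:ℝ) ≤ 2 * R - 1 by linarith)]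


end
end
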